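/- arXiv:1612.07234 — 3 statements merged into one kernel-verified Lean document; each statement's English description precedes it below -/
import Mathlib

section
/- For any finite simple graph G = (V,E), any α ∈ ℝ, and any subgraph γ of G that is a self-avoiding path or a cycle, the ratio of partition functions satisfies Z(V ∖ γ)/Z(V) ≤ (1/(1 + e^{−2α}))^{‖γ‖/2}, where γ is here identified with its vertex set and ‖γ‖ is its number of edges. -/
open scoped Classical BigOperators

noncomputable section

namespace SRP

variable {V : Type*} [Fintype V] [DecidableEq V]

/-- A spatial (graph) permutation on the subgraph induced by `U`:
a permutation of `V` fixing the complement of `U` pointwise and moving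
every point to itself or to one of its neighbours. -/
def IsGPerm (G : SimpleGraph V) (U : Finset V) (π : Equiv.Perm V) : Prop :=
  (∀ x ∉ U, π x = x) ∧ ∀ x : V, π x = x ∨ G.Adj x (π x)

/-- The energy `H(π) = Σ_x 1{π x ≠ x}`. -/
def en (π : Equiv.Perm V) : ℕ := (Finset.univ.filter fun x => π x ≠ x).card

/-- The Gibbs weight `exp(-α H(π))`. -/
def wt (α : ℝ) (π : Equiv.Perm V) : ℝ := Real.exp (-α * en π)

/-- The partition function `Z(U)` of the subgraph induced by `U`. -/
def Z (G : SimpleGraph V) (α : ℝ) (U : Finset V) : ℝ :=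
  ∑ π : Equiv.Perm V, if IsGPerm G U π then wt α π else 0

/-- Gibbs-weighted sum of `f` over the permutations on `U`. -/
def gsum (G : SimpleGraph V) (α : ℝ) (U : Finset V) (f : Equiv.Perm V → ℝ) : ℝ :=
  ∑ π : Equiv.Perm V, if IsGPerm G U π then wt α π * f π else 0

/-- The Gibbs expectation `E_U(f)`. -/
def EU (G : SimpleGraph V) (α : ℝ) (U : Finset V) (f : Equiv.Perm V → ℝ) : ℝ :=
  gsum G α U f / Z G α U

/-- The Gibbs probability `P_U(S)`. -/
def PU (G : SimpleGraph V) (α : ℝ) (U : Finset V) (S : Equiv.Perm V → Prop) : ℝ :=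
  EU G α U fun π => if S π then 1 else 0

/-- Conditional expectation `E_U(f | ev)` given an event. -/
def condE (G : SimpleGraph V) (α : ℝ) (U : Finset V)
    (f : Equiv.Perm V → ℝ) (ev : Equiv.Perm V → Prop) : ℝ :=
  gsum G α U (fun π => if ev π then f π else 0) /
    gsum G α U (fun π => if ev π then 1 else 0)

/-- Conditional probability `P_U(S | ev)`. -/
def condP (G : SimpleGraph V) (α : ℝ) (U : Finset V)
    (S ev : Equiv.Perm V → Prop) : ℝ :=
  condE G α U (fun π => if S π then 1 else 0) ev

/-- The orbit `Or_π(A) = {π^j x : x ∈ A, j ∈ ℕ}`. -/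
def orb (π : Equiv.Perm V) (A : Finset V) : Finset V :=
  Finset.univ.filter fun y => ∃ x ∈ A, ∃ i : ℕ, (⇑π)^[i] x = y

/-- The vertex set of the cycle of `π` through `z`. -/
def cyc (π : Equiv.Perm V) (z : V) : Finset V := orb π {z}

/-- The number of edges `‖γ_z‖` of the cycle of `π` through `z`. -/
def cycEdges (π : Equiv.Perm V) (z : V) : ℕ :=
  if π z = z then 0 else (cyc π z).card

/-- `f` is `F_A`-measurable: it only depends on `π x` and `π⁻¹ x` for `x ∈ A`. -/
def MeasOn (A : Finset V) (f : Equiv.Perm V → ℝ) : Prop :=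
  ∀ π π' : Equiv.Perm V,
    (∀ x ∈ A, π x = π' x ∧ π.symm x = π'.symm x) → f π = f π'

/-- An event is `F_A`-measurable. -/
def EvMeasOn (A : Finset V) (ev : Equiv.Perm V → Prop) : Prop :=
  ∀ π π' : Equiv.Perm V,
    (∀ x ∈ A, π x = π' x ∧ π.symm x = π'.symm x) → (ev π ↔ ev π')

end SRP

namespace SRP
set_option linter.unusedSectionVars false
section Aux
variable {V : Type*} [Fintype V] [DecidableEq V]

/-- index of `x` in the enumeration `v` (first index `< n` with `v i = x`, else `n`). -/
noncomputable def pidx (v : ℕ → V) (n : ℕ) (x : V) : ℕ :=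
  if h : ∃ i, i < n ∧ v i = x then Nat.find h else n

set_option linter.unusedSectionVars false

lemma pidx_spec {v : ℕ → V} {n : ℕ} {x : V} (h : pidx v n x < n) :
    v (pidx v n x) = x := by
  by_cases hex : ∃ i, i < n ∧ v i = x
  · unfold pidx; rw [dif_pos hex]; exact (Nat.find_spec hex).2
  · exfalso; unfold pidx at h; rw [dif_neg hex] at h; omega

lemma pidx_eq {v : ℕ → V} {n : ℕ} (hinj : Set.InjOn v (Set.Iio n)) {i : ℕ}
    (hi : i < n) : pidx v n (v i) = i := by
  have hex : ∃ j, j < n ∧ v j = v i := ⟨i, hi, rfl⟩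
  have h1 : pidx v n (v i) = Nat.find hex := by unfold pidx; rw [dif_pos hex]
  have h2 := Nat.find_spec hex
  rw [h1]
  exact hinj (Set.mem_Iio.2 h2.1) (Set.mem_Iio.2 hi) h2.2

lemma pidx_lt {v : ℕ → V} {n : ℕ} (hinj : Set.InjOn v (Set.Iio n)) {i : ℕ}
    (hi : i < n) : pidx v n (v i) < n := by rw [pidx_eq hinj hi]; exact hi

lemma pidx_not_lt {v : ℕ → V} {n : ℕ} {x : V} (h : ∀ i, i < n → v i ≠ x) :
    ¬ pidx v n x < n := by
  unfold pidx
  split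
  · next hex => exact absurd (Nat.find_spec hex).2 (h _ (Nat.find_spec hex).1)
  · omega

/-- matching hypothesis on a set of edge-indices. -/
structure Matchy (n : ℕ) (M : Finset ℕ) : Prop where
  lt : ∀ i ∈ M, i + 1 < n
  gap : ∀ i ∈ M, i + 1 ∉ M

/-- the function swapping `v i ↔ v (i+1)` for each `i ∈ M`. -/
noncomputable def mfun (v : ℕ → V) (n : ℕ) (M : Finset ℕ) (x : V) : V :=
  if pidx v n x < n then
    if pidx v n x ∈ M then v (pidx v n x + 1)
    else if pidx v n x ≠ 0 ∧ pidx v n x - 1 ∈ M then v (pidx v n x - 1)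
    else x
  else x

variable {G : SimpleGraph V} {v : ℕ → V} {n : ℕ} {M : Finset ℕ}

lemma mfun_fix (hx : ∀ i, i < n → v i ≠ x) : mfun v n M x = x := by
  unfold mfun; rw [if_neg (pidx_not_lt hx)]

lemma mfun_mem (hinj : Set.InjOn v (Set.Iio n)) (hm : Matchy n M) {i : ℕ}
    (hi : i ∈ M) : mfun v n M (v i) = v (i + 1) := by
  unfold mfun
  rw [pidx_eq hinj (by have := hm.lt i hi; omega), if_pos (by have := hm.lt i hi; omega),
    if_pos hi]

lemma mfun_mem' (hinj : Set.InjOn v (Set.Iio n)) (hm : Matchy n M) {i : ℕ}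
    (hi : i ∈ M) : mfun v n M (v (i + 1)) = v i := by
  have h1 := hm.lt i hi
  unfold mfun
  rw [pidx_eq hinj h1, if_pos h1, if_neg (hm.gap i hi), if_pos ⟨by omega, by simpa⟩]
  simp

lemma mfun_nmem (hinj : Set.InjOn v (Set.Iio n)) {i : ℕ} (hi : i < n)
    (h1 : i ∉ M) (h2 : i = 0 ∨ i - 1 ∉ M) : mfun v n M (v i) = v i := by
  unfold mfun
  rw [pidx_eq hinj hi, if_pos hi, if_neg h1, if_neg (by tauto)]

lemma mfun_invol (hinj : Set.InjOn v (Set.Iio n)) (hm : Matchy n M) :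
    Function.Involutive (mfun v n M) := by
  intro x
  by_cases hx : ∃ i, i < n ∧ v i = x
  · obtain ⟨i, hi, rfl⟩ := hx
    by_cases h1 : i ∈ M
    · rw [mfun_mem hinj hm h1, mfun_mem' hinj hm h1]
    · by_cases h2 : i ≠ 0 ∧ i - 1 ∈ M
      · obtain ⟨h2a, h2b⟩ := h2
        have : i - 1 + 1 = i := by omega
        rw [show v i = v (i - 1 + 1) by rw [this], mfun_mem' hinj hm h2b,
          mfun_mem hinj hm h2b, this]
      · rw [mfun_nmem hinj hi h1 (by tauto), mfun_nmem hinj hi h1 (by tauto)]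
  · push_neg at hx
    rw [mfun_fix hx, mfun_fix hx]

/-- the matching permutation. -/
noncomputable def mperm (v : ℕ → V) (n : ℕ) (M : Finset ℕ)
    (hinj : Set.InjOn v (Set.Iio n)) (hm : Matchy n M) : Equiv.Perm V :=
  (mfun_invol hinj hm).toPerm

lemma mperm_apply (hinj : Set.InjOn v (Set.Iio n)) (hm : Matchy n M) (x : V) :
    mperm v n M hinj hm x = mfun v n M x := rfl




variable {G : SimpleGraph V} {v : ℕ → V} {n : ℕ} {M : Finset ℕ}

lemma hinj_ne (hinj : Set.InjOn v (Set.Iio n)) {i j : ℕ} (hi : i < n) (hj : j < n)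
    (hij : i ≠ j) : v i ≠ v j := fun h => hij (hinj (Set.mem_Iio.2 hi) (Set.mem_Iio.2 hj) h)

lemma mperm_moved_iff (hinj : Set.InjOn v (Set.Iio n)) (hm : Matchy n M) (x : V) :
    mperm v n M hinj hm x ≠ x ↔ x ∈ (M ∪ M.image (· + 1)).image v := by
  rw [mperm_apply]
  constructor
  · intro hne
    have hk : pidx v n x < n := by
      by_contra h
      unfold mfun at hne; rw [if_neg h] at hne; exact hne rfl
    have hvx : v (pidx v n x) = x := pidx_spec hk
    set k := pidx v n x with hkdef
    by_cases h1 : k ∈ M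
    · exact Finset.mem_image.2 ⟨k, Finset.mem_union_left _ h1, hvx⟩
    · by_cases h2 : k ≠ 0 ∧ k - 1 ∈ M
      · refine Finset.mem_image.2 ⟨k, Finset.mem_union_right _ ?_, hvx⟩
        exact Finset.mem_image.2 ⟨k - 1, h2.2, by omega⟩
      · exfalso; apply hne
        unfold mfun; rw [← hkdef, if_pos hk, if_neg h1, if_neg h2]
  · intro hx
    obtain ⟨j, hj, rfl⟩ := Finset.mem_image.1 hx
    rcases Finset.mem_union.1 hj with hj1 | hj2
    · rw [mfun_mem hinj hm hj1]
      exact hinj_ne hinj (hm.lt j hj1) (by have := hm.lt j hj1; omega) (by omega)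
    · obtain ⟨i, hi, rfl⟩ := Finset.mem_image.1 hj2
      rw [mfun_mem' hinj hm hi]
      exact hinj_ne hinj (by have := hm.lt i hi; omega) (hm.lt i hi) (by omega)

lemma en_mperm (hinj : Set.InjOn v (Set.Iio n)) (hm : Matchy n M) :
    en (mperm v n M hinj hm) = 2 * M.card := by
  have hset : Finset.univ.filter (fun x => mperm v n M hinj hm x ≠ x)
      = (M ∪ M.image (· + 1)).image v := by
    ext x
    simp only [Finset.mem_filter, Finset.mem_univ, true_and]
    exact mperm_moved_iff hinj hm x
  have hsub : ∀ j ∈ M ∪ M.image (· + 1), j < n := by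
    intro j hj
    rcases Finset.mem_union.1 hj with h | h
    · have := hm.lt j h; omega
    · obtain ⟨i, hi, rfl⟩ := Finset.mem_image.1 h; exact hm.lt i hi
  have hdisj : Disjoint M (M.image (· + 1)) := by
    rw [Finset.disjoint_right]
    intro j hj1 hj2
    obtain ⟨i, hi, rfl⟩ := Finset.mem_image.1 hj1
    exact hm.gap i hi hj2
  rw [en, hset, Finset.card_image_of_injOn
      (fun a ha b hb hab => hinj (Set.mem_Iio.2 (hsub a ha)) (Set.mem_Iio.2 (hsub b hb)) hab),
    Finset.card_union_of_disjoint hdisj,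
    Finset.card_image_of_injective _ (add_left_injective 1)]
  ring

lemma mperm_adj (hinj : Set.InjOn v (Set.Iio n)) (hm : Matchy n M)
    (hadj : ∀ i, i + 1 < n → G.Adj (v i) (v (i + 1))) (x : V) :
    mperm v n M hinj hm x = x ∨ G.Adj x (mperm v n M hinj hm x) := by
  by_cases hne : mperm v n M hinj hm x = x
  · exact Or.inl hne
  · right
    obtain ⟨j, hj, rfl⟩ := Finset.mem_image.1 ((mperm_moved_iff hinj hm x).1 hne)
    rcases Finset.mem_union.1 hj with h | h
    · rw [mperm_apply, mfun_mem hinj hm h]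
      exact hadj j (hm.lt j h)
    · obtain ⟨i, hi, rfl⟩ := Finset.mem_image.1 h
      rw [mperm_apply, mfun_mem' hinj hm hi]
      exact (hadj i (hm.lt i hi)).symm

lemma mperm_fix (hinj : Set.InjOn v (Set.Iio n)) (hm : Matchy n M) {x : V}
    (hx : ∀ i, i < n → v i ≠ x) : mperm v n M hinj hm x = x := mfun_fix hx

lemma mperm_maps (hinj : Set.InjOn v (Set.Iio n)) (hm : Matchy n M)
    {γ : Finset V} (hγ : ∀ i, i < n → v i ∈ γ) {x : V} (hx : x ∈ γ) :
    mperm v n M hinj hm x ∈ γ := by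
  by_cases hne : mperm v n M hinj hm x = x
  · rwa [hne]
  · obtain ⟨j, hj, hji⟩ := Finset.mem_image.1 ((mperm_moved_iff hinj hm x).1 hne)
    subst hji
    rcases Finset.mem_union.1 hj with h | h
    · rw [mperm_apply, mfun_mem hinj hm h]; exact hγ _ (hm.lt j h)
    · obtain ⟨i, hi, rfl⟩ := Finset.mem_image.1 h
      rw [mperm_apply, mfun_mem' hinj hm hi]
      exact hγ _ (by have := hm.lt i hi; omega)

lemma mperm_eq_iff (hinj : Set.InjOn v (Set.Iio n)) (hm : Matchy n M) {i : ℕ}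
    (hi : i + 1 < n) : mperm v n M hinj hm (v i) = v (i + 1) ↔ i ∈ M := by
  constructor
  · intro h
    by_contra h1
    by_cases h2 : i ≠ 0 ∧ i - 1 ∈ M
    · rw [mperm_apply] at h
      unfold mfun at h
      rw [pidx_eq hinj (by omega), if_pos (by omega : i < n), if_neg h1, if_pos h2] at h
      exact hinj_ne hinj (by omega) hi (by omega) h
    · rw [mperm_apply, mfun_nmem hinj (by omega) h1 (by tauto)] at h
      exact hinj_ne hinj (by omega) hi (by omega) h
  · intro h; rw [mperm_apply, mfun_mem hinj hm h]

/-- the rotation `v i ↦ v ((i+d) % n)`. -/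
noncomputable def rfun (v : ℕ → V) (n d : ℕ) (x : V) : V :=
  if pidx v n x < n then v ((pidx v n x + d) % n) else x

lemma rfun_apply (hinj : Set.InjOn v (Set.Iio n)) {i : ℕ} (hi : i < n) (d : ℕ) :
    rfun v n d (v i) = v ((i + d) % n) := by
  unfold rfun; rw [pidx_eq hinj hi, if_pos hi]

lemma rfun_fix {x : V} (hx : ∀ i, i < n → v i ≠ x) (d : ℕ) : rfun v n d x = x := by
  unfold rfun; rw [if_neg (pidx_not_lt hx)]

lemma rfun_rfun (hinj : Set.InjOn v (Set.Iio n)) (hn : 0 < n) {d d' : ℕ}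
    (hdd : (d + d') % n = 0) (x : V) : rfun v n d' (rfun v n d x) = x := by
  by_cases hx : ∃ i, i < n ∧ v i = x
  · obtain ⟨i, hi, rfl⟩ := hx
    rw [rfun_apply hinj hi, rfun_apply hinj (Nat.mod_lt _ hn)]
    congr 1
    rw [Nat.mod_add_mod, Nat.add_assoc, Nat.add_mod, hdd, Nat.add_zero, Nat.mod_mod_of_dvd i dvd_rfl,
      Nat.mod_eq_of_lt hi]
  · push_neg at hx
    rw [rfun_fix hx, rfun_fix hx]

/-- the rotation permutation. -/
noncomputable def rperm (v : ℕ → V) (n : ℕ) (hinj : Set.InjOn v (Set.Iio n))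
    (hn : 0 < n) : Equiv.Perm V where
  toFun := rfun v n 1
  invFun := rfun v n (n - 1)
  left_inv := fun x => rfun_rfun hinj hn (by rw [show 1 + (n-1) = n by omega]; exact Nat.mod_self n) x
  right_inv := fun x => rfun_rfun hinj hn (by rw [show n - 1 + 1 = n by omega]; exact Nat.mod_self n) x

lemma rperm_apply (hinj : Set.InjOn v (Set.Iio n)) (hn : 0 < n) {i : ℕ} (hi : i < n) :
    rperm v n hinj hn (v i) = v ((i + 1) % n) := rfun_apply hinj hi 1

lemma rperm_fix (hinj : Set.InjOn v (Set.Iio n)) (hn : 0 < n) {x : V}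
    (hx : ∀ i, i < n → v i ≠ x) : rperm v n hinj hn x = x := rfun_fix hx 1

lemma succ_mod_ne {n i : ℕ} (hn : 2 ≤ n) (hi : i < n) : (i + 1) % n ≠ i := by
  rcases Nat.lt_or_ge (i+1) n with h | h
  · rw [Nat.mod_eq_of_lt h]; omega
  · have : i + 1 = n := by omega
    rw [this, Nat.mod_self]; omega

lemma rperm_moved_iff (hinj : Set.InjOn v (Set.Iio n)) (hn0 : 0 < n) (hn : 2 ≤ n) (x : V) :
    rperm v n hinj hn0 x ≠ x ↔ x ∈ (Finset.range n).image v := by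
  constructor
  · intro hne
    by_cases hx : ∃ i, i < n ∧ v i = x
    · obtain ⟨i, hi, rfl⟩ := hx
      exact Finset.mem_image.2 ⟨i, Finset.mem_range.2 hi, rfl⟩
    · push_neg at hx
      exact absurd (rperm_fix hinj hn0 hx) hne
  · rintro hx
    obtain ⟨i, hi, rfl⟩ := Finset.mem_image.1 hx
    rw [Finset.mem_range] at hi
    rw [rperm_apply hinj hn0 hi]
    exact hinj_ne hinj (Nat.mod_lt _ hn0) hi (succ_mod_ne hn hi)

lemma en_rperm (hinj : Set.InjOn v (Set.Iio n)) (hn0 : 0 < n) (hn : 2 ≤ n) :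
    en (rperm v n hinj hn0) = n := by
  have hset : Finset.univ.filter (fun x => rperm v n hinj hn0 x ≠ x)
      = (Finset.range n).image v := by
    ext x
    simp only [Finset.mem_filter, Finset.mem_univ, true_and]
    exact rperm_moved_iff hinj hn0 hn x
  rw [en, hset, Finset.card_image_of_injOn
      (fun a ha b hb hab => hinj (Set.mem_Iio.2 (Finset.mem_range.1 ha))
        (Set.mem_Iio.2 (Finset.mem_range.1 hb)) hab),
    Finset.card_range]

lemma rperm_adj (hinj : Set.InjOn v (Set.Iio n)) (hn : 0 < n)
    (hadj : ∀ i, i < n → G.Adj (v i) (v ((i + 1) % n))) (x : V) :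
    rperm v n hinj hn x = x ∨ G.Adj x (rperm v n hinj hn x) := by
  by_cases hx : ∃ i, i < n ∧ v i = x
  · obtain ⟨i, hi, rfl⟩ := hx
    rw [rperm_apply hinj hn hi]
    exact Or.inr (hadj i hi)
  · push_neg at hx
    exact Or.inl (rperm_fix hinj hn hx)

lemma rperm_maps (hinj : Set.InjOn v (Set.Iio n)) (hn : 0 < n)
    {γ : Finset V} (hγ : ∀ i, i < n → v i ∈ γ) {x : V} (hx : x ∈ γ) :
    rperm v n hinj hn x ∈ γ := by
  by_cases hex : ∃ i, i < n ∧ v i = x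
  · obtain ⟨i, hi, rfl⟩ := hex
    rw [rperm_apply hinj hn hi]
    exact hγ _ (Nat.mod_lt _ hn)
  · push_neg at hex
    rw [rperm_fix hinj hn hex]; exact hx


section RunLen

/-- length of the run of `S` ending just below `i`. -/
def rl (S : Finset ℕ) : ℕ → ℕ
  | 0 => 0
  | (i+1) => if i ∈ S then rl S i + 1 else 0

/-- indices of `S` with even run-length. -/
def Mev (S : Finset ℕ) : Finset ℕ := S.filter fun i => rl S i % 2 = 0
/-- indices of `S` with odd run-length. -/
def Mod' (S : Finset ℕ) : Finset ℕ := S.filter fun i => rl S i % 2 = 1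

lemma Mev_union_Mod' (S : Finset ℕ) : Mev S ∪ Mod' S = S := by
  ext i
  simp only [Mev, Mod', Finset.mem_union, Finset.mem_filter]
  constructor
  · rintro (⟨h, _⟩ | ⟨h, _⟩) <;> exact h
  · intro h
    rcases Nat.mod_two_eq_zero_or_one (rl S i) with h2 | h2
    · exact Or.inl ⟨h, h2⟩
    · exact Or.inr ⟨h, h2⟩

lemma Mev_disj_Mod' (S : Finset ℕ) : Disjoint (Mev S) (Mod' S) := by
  rw [Finset.disjoint_left]
  intro i h1 h2
  simp only [Mev, Mod', Finset.mem_filter] at h1 h2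
  omega

lemma card_Mev_add_Mod' (S : Finset ℕ) : (Mev S).card + (Mod' S).card = S.card := by
  rw [← Finset.card_union_of_disjoint (Mev_disj_Mod' S), Mev_union_Mod' S]

lemma rl_succ_of_mem {S : Finset ℕ} {i : ℕ} (h : i ∈ S) : rl S (i+1) = rl S i + 1 := by
  simp [rl, h]

lemma matchy_Mev {S : Finset ℕ} {n : ℕ} (hS : S ⊆ Finset.range (n-1)) :
    Matchy n (Mev S) where
  lt := fun i hi => by
    have := Finset.mem_range.1 (hS (Finset.filter_subset _ _ hi)); omega
  gap := fun i hi hi1 => by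
    simp only [Mev, Finset.mem_filter] at hi hi1
    rw [rl_succ_of_mem hi.1] at hi1; omega

lemma matchy_Mod' {S : Finset ℕ} {n : ℕ} (hS : S ⊆ Finset.range (n-1)) :
    Matchy n (Mod' S) where
  lt := fun i hi => by
    have := Finset.mem_range.1 (hS (Finset.filter_subset _ _ hi)); omega
  gap := fun i hi hi1 => by
    simp only [Mod', Finset.mem_filter] at hi hi1
    rw [rl_succ_of_mem hi.1] at hi1; omega

end RunLen

section Glue
variable {G : SimpleGraph V} {γ : Finset V} {σ a : Equiv.Perm V} {α : ℝ}

lemma sigma_fix (hσ : IsGPerm G (Finset.univ \ γ) σ) {x : V} (hx : x ∈ γ) : σ x = x :=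
  hσ.1 x (by simp [hx])

lemma comp_on (hσ : IsGPerm G (Finset.univ \ γ) σ)
    (ha_maps : ∀ x ∈ γ, a x ∈ γ) {x : V} (hx : x ∈ γ) : (σ * a) x = a x := by
  have h : (σ * a) x = σ (a x) := rfl
  rw [h, sigma_fix hσ (ha_maps x hx)]

lemma comp_isGPerm (hσ : IsGPerm G (Finset.univ \ γ) σ)
    (ha_adj : ∀ x, a x = x ∨ G.Adj x (a x))
    (ha_fix : ∀ x ∉ γ, a x = x)
    (ha_maps : ∀ x ∈ γ, a x ∈ γ) : IsGPerm G Finset.univ (σ * a) := by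
  constructor
  · intro x hx; exact absurd (Finset.mem_univ x) hx
  · intro x
    by_cases hx : x ∈ γ
    · rw [comp_on hσ ha_maps hx]; exact ha_adj x
    · have h : (σ * a) x = σ x := by
        have h2 : (σ * a) x = σ (a x) := rfl
        rw [h2, ha_fix x hx]
      rw [h]; exact hσ.2 x

lemma comp_en (hσ : IsGPerm G (Finset.univ \ γ) σ)
    (ha_fix : ∀ x ∉ γ, a x = x)
    (ha_maps : ∀ x ∈ γ, a x ∈ γ) : en (σ * a) = en σ + en a := by
  have key : ∀ x : V, ((σ * a) x ≠ x) ↔ (σ x ≠ x ∨ a x ≠ x) := by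
    intro x
    by_cases hx : x ∈ γ
    · rw [comp_on hσ ha_maps hx]
      have := sigma_fix hσ hx
      constructor
      · intro h; exact Or.inr h
      · rintro (h | h)
        · exact absurd this h
        · exact h
    · have h1 : a x = x := ha_fix x hx
      have h2 : (σ * a) x = σ x := by
        have h3 : (σ * a) x = σ (a x) := rfl
        rw [h3, h1]
      rw [h2]
      constructor
      · intro h; exact Or.inl h
      · rintro (h | h)
        · exact h
        · exact absurd h1 h
  have hdisj : Disjoint (Finset.univ.filter fun x => σ x ≠ x)
      (Finset.univ.filter fun x => a x ≠ x) := by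
    rw [Finset.disjoint_left]
    intro x h1 h2
    simp only [Finset.mem_filter, Finset.mem_univ, true_and] at h1 h2
    by_cases hx : x ∈ γ
    · exact h1 (sigma_fix hσ hx)
    · exact h2 (ha_fix x hx)
  have hset : (Finset.univ.filter fun x => (σ * a) x ≠ x)
      = (Finset.univ.filter fun x => σ x ≠ x) ∪ (Finset.univ.filter fun x => a x ≠ x) := by
    ext x
    simp only [Finset.mem_filter, Finset.mem_univ, true_and, Finset.mem_union]
    exact key x
  rw [en, en, en, hset, Finset.card_union_of_disjoint hdisj]

lemma wt_pos (α : ℝ) (π : Equiv.Perm V) : 0 < wt α π := Real.exp_pos _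

lemma wt_comp (hσ : IsGPerm G (Finset.univ \ γ) σ)
    (ha_fix : ∀ x ∉ γ, a x = x)
    (ha_maps : ∀ x ∈ γ, a x ∈ γ) :
    wt α (σ * a) = wt α σ * Real.exp (-α * en a) := by
  rw [wt, wt, comp_en hσ ha_fix ha_maps, ← Real.exp_add]
  congr 1
  push_cast
  ring

end Glue

/-- the powerset-sum identity `∑_{S ⊆ range m} x^|S| = (1+x)^m`. -/
lemma sum_powerset_pow (x : ℝ) (m : ℕ) :
    ∑ S ∈ (Finset.range m).powerset, x ^ S.card = (1 + x) ^ m := by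
  have h := Finset.prod_add (fun _ : ℕ => x) (fun _ : ℕ => 1) (Finset.range m)
  simp only [Finset.prod_const, Finset.prod_const_one, one_pow, mul_one] at h
  rw [add_comm x 1, Finset.card_range] at h
  exact h.symm

/-- The master injection lemma. -/
lemma Z_sq_le (G : SimpleGraph V) (α : ℝ) (γ : Finset V) (m : ℕ)
    (a b : Finset ℕ → Equiv.Perm V)
    (hab : ∀ S ∈ (Finset.range m).powerset,
      (∀ x, a S x = x ∨ G.Adj x (a S x)) ∧ (∀ x, b S x = x ∨ G.Adj x (b S x)) ∧
      (∀ x ∉ γ, a S x = x) ∧ (∀ x ∉ γ, b S x = x) ∧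
      (∀ x ∈ γ, a S x ∈ γ) ∧ (∀ x ∈ γ, b S x ∈ γ) ∧
      en (a S) + en (b S) = 2 * S.card)
    (hrec : ∀ S ∈ (Finset.range m).powerset, ∀ T ∈ (Finset.range m).powerset,
      (∀ x ∈ γ, a S x = a T x) → (∀ x ∈ γ, b S x = b T x) → S = T) :
    Z G α (Finset.univ \ γ) ^ 2 * (1 + Real.exp (-2 * α)) ^ m ≤ Z G α Finset.univ ^ 2 := by
  classical
  set A : Finset (Equiv.Perm V) := Finset.univ.filter (IsGPerm G (Finset.univ \ γ)) with hA
  set B : Finset (Equiv.Perm V) := Finset.univ.filter (IsGPerm G Finset.univ) with hB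
  have hZA : Z G α (Finset.univ \ γ) = ∑ σ ∈ A, wt α σ := by
    rw [Z, hA, Finset.sum_filter]
  have hZB : Z G α Finset.univ = ∑ π ∈ B, wt α π := by
    rw [Z, hB, Finset.sum_filter]
  set D : Finset ((Equiv.Perm V × Equiv.Perm V) × Finset ℕ) :=
    (A ×ˢ A) ×ˢ (Finset.range m).powerset with hD
  set Φ : (Equiv.Perm V × Equiv.Perm V) × Finset ℕ → Equiv.Perm V × Equiv.Perm V :=
    fun p => (p.1.1 * a p.2, p.1.2 * b p.2) with hΦ
  set W : Equiv.Perm V × Equiv.Perm V → ℝ := fun q => wt α q.1 * wt α q.2 with hW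
  have memD : ∀ p ∈ D, IsGPerm G (Finset.univ \ γ) p.1.1 ∧
      IsGPerm G (Finset.univ \ γ) p.1.2 ∧ p.2 ∈ (Finset.range m).powerset := by
    rintro ⟨⟨s1, s2⟩, S⟩ hp
    simp only [hD, Finset.mem_product, hA, Finset.mem_filter, Finset.mem_univ, true_and] at hp
    exact ⟨hp.1.1, hp.1.2, hp.2⟩
  have step1 : Z G α (Finset.univ \ γ) ^ 2 * (1 + Real.exp (-2 * α)) ^ m
      = ∑ p ∈ D, (wt α p.1.1 * wt α p.1.2 * Real.exp (-2 * α) ^ p.2.card) := by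
    have e1 : ∑ p ∈ D, (wt α p.1.1 * wt α p.1.2 * Real.exp (-2 * α) ^ p.2.card)
        = (∑ q ∈ A ×ˢ A, W q) * ∑ S ∈ (Finset.range m).powerset,
            Real.exp (-2 * α) ^ S.card := by
      rw [hD, Finset.sum_product, Finset.sum_mul]
      apply Finset.sum_congr rfl
      intro q _
      rw [Finset.mul_sum]
    have e2 : (∑ q ∈ A ×ˢ A, W q) = Z G α (Finset.univ \ γ) ^ 2 := by
      rw [Finset.sum_product, hZA, sq, Finset.sum_mul_sum]
    rw [e1, e2, sum_powerset_pow]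
  have step2 : ∀ p ∈ D, wt α p.1.1 * wt α p.1.2 * Real.exp (-2 * α) ^ p.2.card
      = W (Φ p) := by
    rintro ⟨⟨σ1, σ2⟩, S⟩ hp
    obtain ⟨hσ1, hσ2, hS⟩ := memD _ hp
    obtain ⟨_, _, haf, hbf, ham, hbm, hen⟩ := hab S hS
    simp only [hW, hΦ]
    rw [wt_comp hσ1 haf ham, wt_comp hσ2 hbf hbm]
    have he : Real.exp (-2 * α) ^ S.card
        = Real.exp (-α * en (a S)) * Real.exp (-α * en (b S)) := by
      rw [← Real.exp_nat_mul, ← Real.exp_add]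
      congr 1
      have hc : (en (a S) : ℝ) + (en (b S) : ℝ) = 2 * (S.card : ℝ) := by
        exact_mod_cast congrArg (Nat.cast (R := ℝ)) hen
      linear_combination α * hc
    rw [he]
    ring
  have hinjΦ : ∀ p ∈ D, ∀ q ∈ D, Φ p = Φ q → p = q := by
    rintro ⟨⟨σ1, σ1'⟩, S1⟩ hp ⟨⟨σ2, σ2'⟩, S2⟩ hq heq
    obtain ⟨hσ1, hσ1', hS1⟩ := memD _ hp
    obtain ⟨hσ2, hσ2', hS2⟩ := memD _ hq
    have e1 : σ1 * a S1 = σ2 * a S2 := congrArg Prod.fst heq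
    have e2 : σ1' * b S1 = σ2' * b S2 := congrArg Prod.snd heq
    have hS : S1 = S2 := by
      apply hrec S1 hS1 S2 hS2
      · intro x hx
        have h1 := comp_on hσ1 (hab S1 hS1).2.2.2.2.1 hx
        have h2 := comp_on hσ2 (hab S2 hS2).2.2.2.2.1 hx
        rw [← h1, ← h2, e1]
      · intro x hx
        have h1 := comp_on hσ1' (hab S1 hS1).2.2.2.2.2.1 hx
        have h2 := comp_on hσ2' (hab S2 hS2).2.2.2.2.2.1 hx
        rw [← h1, ← h2, e2]
    subst hS
    have hea : σ1 = σ2 := mul_right_cancel e1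
    have heb : σ1' = σ2' := mul_right_cancel e2
    rw [hea, heb]
  have himg : D.image Φ ⊆ B ×ˢ B := by
    intro q hq
    obtain ⟨p, hp, rfl⟩ := Finset.mem_image.1 hq
    obtain ⟨h1, h2, hS⟩ := memD p hp
    obtain ⟨haadj, hbadj, haf, hbf, ham, hbm, _⟩ := hab p.2 hS
    simp only [hB, Finset.mem_product, Finset.mem_filter, Finset.mem_univ, true_and, hΦ]
    exact ⟨comp_isGPerm h1 haadj haf ham, comp_isGPerm h2 hbadj hbf hbm⟩
  calc Z G α (Finset.univ \ γ) ^ 2 * (1 + Real.exp (-2 * α)) ^ m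
      = ∑ p ∈ D, (wt α p.1.1 * wt α p.1.2 * Real.exp (-2 * α) ^ p.2.card) := step1
    _ = ∑ p ∈ D, W (Φ p) := Finset.sum_congr rfl step2
    _ = ∑ q ∈ D.image Φ, W q := (Finset.sum_image hinjΦ).symm
    _ ≤ ∑ q ∈ B ×ˢ B, W q :=
        Finset.sum_le_sum_of_subset_of_nonneg himg
          (fun q _ _ => le_of_lt (mul_pos (wt_pos α _) (wt_pos α _)))
    _ = Z G α Finset.univ ^ 2 := by
        rw [Finset.sum_product, hZB, sq, Finset.sum_mul_sum]

section Core
variable {G : SimpleGraph V} {v : ℕ → V} {n : ℕ}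

lemma en_one : en (1 : Equiv.Perm V) = 0 := by
  rw [en]
  simp

/-- The path core estimate. -/
lemma core_path (G : SimpleGraph V) (α : ℝ) (v : ℕ → V) (n : ℕ)
    (hinj : Set.InjOn v (Set.Iio n))
    (hadj : ∀ i, i + 1 < n → G.Adj (v i) (v (i + 1))) :
    Z G α (Finset.univ \ (Finset.range n).image v) ^ 2 * (1 + Real.exp (-2 * α)) ^ (n - 1)
      ≤ Z G α Finset.univ ^ 2 := by
  classical
  set γ : Finset V := (Finset.range n).image v with hγ
  have hmemγ : ∀ i, i < n → v i ∈ γ := fun i hi =>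
    Finset.mem_image.2 ⟨i, Finset.mem_range.2 hi, rfl⟩
  have hfixγ : ∀ x, x ∉ γ → ∀ i, i < n → v i ≠ x := by
    intro x hx i hi h
    exact hx (h ▸ hmemγ i hi)
  set a : Finset ℕ → Equiv.Perm V := fun S =>
    mperm v n (Mev (S ∩ Finset.range (n-1))) hinj
      (matchy_Mev Finset.inter_subset_right) with ha
  set b : Finset ℕ → Equiv.Perm V := fun S =>
    mperm v n (Mod' (S ∩ Finset.range (n-1))) hinj
      (matchy_Mod' Finset.inter_subset_right) with hb
  have key : ∀ S ∈ (Finset.range (n-1)).powerset, ∀ i, i + 1 < n →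
      (i ∈ S ↔ (a S (v i) = v (i+1) ∨ b S (v i) = v (i+1))) := by
    intro S hS i hi
    have hSr : S ∩ Finset.range (n-1) = S :=
      Finset.inter_eq_left.2 (Finset.mem_powerset.1 hS)
    rw [ha, hb]
    simp only []
    rw [mperm_eq_iff hinj _ hi, mperm_eq_iff hinj _ hi, hSr]
    constructor
    · intro h
      have := Mev_union_Mod' S
      rw [← this] at h
      rcases Finset.mem_union.1 h with h | h
      · exact Or.inl h
      · exact Or.inr h
    · rintro (h | h)
      · exact Finset.filter_subset _ _ h
      · exact Finset.filter_subset _ _ h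
  apply Z_sq_le G α γ (n-1) a b
  · intro S hS
    have hSr : S ∩ Finset.range (n-1) = S :=
      Finset.inter_eq_left.2 (Finset.mem_powerset.1 hS)
    refine ⟨mperm_adj hinj _ hadj, mperm_adj hinj _ hadj,
      fun x hx => mperm_fix hinj _ (hfixγ x hx),
      fun x hx => mperm_fix hinj _ (hfixγ x hx),
      fun x hx => mperm_maps hinj _ hmemγ hx,
      fun x hx => mperm_maps hinj _ hmemγ hx, ?_⟩
    rw [ha, hb]
    simp only []
    rw [en_mperm hinj _, en_mperm hinj _, hSr]
    have := card_Mev_add_Mod' S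
    omega
  · intro S hS T hT haeq hbeq
    ext i
    constructor
    · intro hiS
      have hilt : i + 1 < n := by
        have := Finset.mem_range.1 (Finset.mem_powerset.1 hS hiS); omega
      have h1 := (key S hS i hilt).1 hiS
      apply (key T hT i hilt).2
      rcases h1 with h | h
      · exact Or.inl ((haeq (v i) (hmemγ i (by omega))).symm ▸ h)
      · exact Or.inr ((hbeq (v i) (hmemγ i (by omega))).symm ▸ h)
    · intro hiT
      have hilt : i + 1 < n := by
        have := Finset.mem_range.1 (Finset.mem_powerset.1 hT hiT); omega
      have h1 := (key T hT i hilt).1 hiT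
      apply (key S hS i hilt).2
      rcases h1 with h | h
      · exact Or.inl ((haeq (v i) (hmemγ i (by omega))) ▸ h)
      · exact Or.inr ((hbeq (v i) (hmemγ i (by omega))) ▸ h)

end Core

section CycleHelpers
variable {G : SimpleGraph V} {γ : Finset V} {v : ℕ → V} {n : ℕ} {M : Finset ℕ}

lemma inv_fix_iff (π : Equiv.Perm V) (x : V) : π⁻¹ x = x ↔ π x = x := by
  constructor
  · intro h
    conv_lhs => rw [← h]
    exact π.apply_symm_apply x
  · intro h
    conv_lhs => rw [← h]
    exact π.symm_apply_apply x

lemma en_inv (π : Equiv.Perm V) : en π⁻¹ = en π := by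
  rw [en, en]
  congr 1
  ext x
  simp only [Finset.mem_filter, Finset.mem_univ, true_and, ne_eq]
  rw [inv_fix_iff]

lemma inv_adj {π : Equiv.Perm V} (h : ∀ x, π x = x ∨ G.Adj x (π x)) :
    ∀ x, π⁻¹ x = x ∨ G.Adj x (π⁻¹ x) := by
  intro x
  rcases h (π⁻¹ x) with h1 | h1
  · left
    rw [show π (π⁻¹ x) = x from π.apply_symm_apply x] at h1
    exact h1.symm
  · right
    rw [show π (π⁻¹ x) = x from π.apply_symm_apply x] at h1
    exact h1.symm

lemma inv_fix {π : Equiv.Perm V} (hfix : ∀ x ∉ γ, π x = x) :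
    ∀ x ∉ γ, π⁻¹ x = x := fun x hx => (inv_fix_iff π x).2 (hfix x hx)

lemma inv_maps {π : Equiv.Perm V} (hfix : ∀ x ∉ γ, π x = x) :
    ∀ x ∈ γ, π⁻¹ x ∈ γ := by
  intro x hx
  by_contra h
  have h2 := hfix _ h
  rw [show π (π⁻¹ x) = x from π.apply_symm_apply x] at h2
  exact h (h2 ▸ hx)

lemma addmod_injOn (c n : ℕ) : Set.InjOn (fun p => (c + p) % n) (Set.Iio n) := by
  intro p1 h1 p2 h2 h
  simp only [Set.mem_Iio] at h1 h2
  have h' : (c + p1) % n = (c + p2) % n := h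
  have h2' : p1 ≡ p2 [MOD n] := Nat.ModEq.add_left_cancel' c h'
  rwa [Nat.ModEq, Nat.mod_eq_of_lt h1, Nat.mod_eq_of_lt h2] at h2'

lemma crt_aux {n : ℕ} (hn : 0 < n) (c q : ℕ) (hq : q < n) :
    (c + (q + n - c % n) % n) % n = q := by
  have h1 : (c + (q + n - c % n) % n) % n = (c + (q + n - c % n)) % n := by
    rw [Nat.add_mod_mod]
  rw [h1]
  have hle : c % n ≤ c := Nat.mod_le c n
  have hlt : c % n < n := Nat.mod_lt _ hn
  have h2 : c + (q + n - c % n) = (c - c % n) + (q + n) := by omega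
  rw [h2]
  obtain ⟨k, hk⟩ : n ∣ (c - c % n) := by
    have := Nat.div_add_mod c n
    exact ⟨c / n, by omega⟩
  rw [hk]
  have h3 : n * k + (q + n) = q + n * (k + 1) := by ring
  rw [h3, Nat.add_mul_mod_self_left, Nat.mod_eq_of_lt hq]

lemma mperm_cases (hinj : Set.InjOn v (Set.Iio n)) (hm : Matchy n M) {i : ℕ}
    (hi : i < n) :
    mperm v n M hinj hm (v i) = v i ∨ (i ∈ M ∧ mperm v n M hinj hm (v i) = v (i+1)) ∨
      (i ≠ 0 ∧ i - 1 ∈ M ∧ mperm v n M hinj hm (v i) = v (i-1)) := by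
  by_cases h1 : i ∈ M
  · exact Or.inr (Or.inl ⟨h1, mfun_mem hinj hm h1⟩)
  · by_cases h2 : i ≠ 0 ∧ i - 1 ∈ M
    · refine Or.inr (Or.inr ⟨h2.1, h2.2, ?_⟩)
      rw [mperm_apply]
      unfold mfun
      rw [pidx_eq hinj hi, if_pos hi, if_neg h1, if_pos h2]
    · left
      rw [mperm_apply, mfun_nmem hinj hi h1 (by tauto)]

end CycleHelpers

/-- The cycle core estimate (for `n ≥ 3`). -/
lemma core_cycle (G : SimpleGraph V) (α : ℝ) (v : ℕ → V) (n : ℕ) (hn : 3 ≤ n)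
    (hinj : Set.InjOn v (Set.Iio n))
    (hcadj : ∀ i, i < n → G.Adj (v i) (v ((i + 1) % n))) :
    Z G α (Finset.univ \ (Finset.range n).image v) ^ 2 * (1 + Real.exp (-2 * α)) ^ n
      ≤ Z G α Finset.univ ^ 2 := by
  classical
  have hn0 : 0 < n := by omega
  set γ : Finset V := (Finset.range n).image v with hγ
  have hmemγ : ∀ i, i < n → v i ∈ γ := fun i hi =>
    Finset.mem_image.2 ⟨i, Finset.mem_range.2 hi, rfl⟩
  have hfixγ : ∀ x, x ∉ γ → ∀ i, i < n → v i ≠ x := fun x hx i hi h => hx (h ▸ hmemγ i hi)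
  set c : Finset ℕ → ℕ := fun S => (if h : ∃ j, j < n ∧ j ∉ S then Nat.find h else 0) + 1
    with hc
  set w : Finset ℕ → ℕ → V := fun S p => v ((c S + p) % n) with hw
  have hinjw : ∀ S, Set.InjOn (w S) (Set.Iio n) := by
    intro S p1 h1 p2 h2 h
    have h' : v ((c S + p1) % n) = v ((c S + p2) % n) := h
    have h'' : (c S + p1) % n = (c S + p2) % n :=
      hinj (Set.mem_Iio.2 (Nat.mod_lt _ hn0)) (Set.mem_Iio.2 (Nat.mod_lt _ hn0)) h'
    exact addmod_injOn (c S) n h1 h2 h''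
  have hadjw : ∀ S, ∀ p, p + 1 < n → G.Adj (w S p) (w S (p + 1)) := by
    intro S p hp
    have key2 : ((c S + p) % n + 1) % n = (c S + (p + 1)) % n := by
      rw [Nat.mod_add_mod]
      congr 1
    have h2 := hcadj ((c S + p) % n) (Nat.mod_lt _ hn0)
    rw [key2] at h2
    exact h2
  have hmemγw : ∀ S p, w S p ∈ γ := fun S p => hmemγ _ (Nat.mod_lt _ hn0)
  have hfixγw : ∀ S x, x ∉ γ → ∀ p, p < n → w S p ≠ x := fun S x hx p _ h =>
    hx (h ▸ hmemγw S p)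
  set Sm : Finset ℕ → Finset ℕ :=
    fun S => (Finset.range (n - 1)).filter (fun p => (c S + p) % n ∈ S) with hSm
  set a : Finset ℕ → Equiv.Perm V := fun S =>
    if S = Finset.range n then rperm v n hinj hn0
    else mperm (w S) n (Mev (Sm S)) (hinjw S) (matchy_Mev (Finset.filter_subset _ _))
    with ha
  set b : Finset ℕ → Equiv.Perm V := fun S =>
    if S = Finset.range n then (rperm v n hinj hn0)⁻¹
    else mperm (w S) n (Mod' (Sm S)) (hinjw S) (matchy_Mod' (Finset.filter_subset _ _))
    with hb
  -- facts about the chosen missing index for proper subsets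
  have hjfact : ∀ S : Finset ℕ, S ⊆ Finset.range n → S ≠ Finset.range n →
      c S - 1 < n ∧ c S - 1 ∉ S ∧ c S = (c S - 1) + 1 := by
    intro S hS hne
    have hex : ∃ j, j < n ∧ j ∉ S := by
      obtain ⟨j, hj1, hj2⟩ := Finset.exists_of_ssubset (lt_of_le_of_ne hS hne)
      exact ⟨j, Finset.mem_range.1 hj1, hj2⟩
    have h1 : c S = Nat.find hex + 1 := by rw [hc]; simp only [dif_pos hex]
    have h2 := Nat.find_spec hex
    refine ⟨?_, ?_, by omega⟩
    · omega
    · have : c S - 1 = Nat.find hex := by omega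
      rw [this]; exact h2.2
  -- the bijection between Sm S and S for proper subsets
  have hcard : ∀ S : Finset ℕ, S ⊆ Finset.range n → S ≠ Finset.range n →
      (Sm S).card = S.card := by
    intro S hS hne
    obtain ⟨hj1, hj2, hj3⟩ := hjfact S hS hne
    apply Finset.card_bij (fun p _ => (c S + p) % n)
    · intro p hp
      exact (Finset.mem_filter.1 hp).2
    · intro p1 hp1 p2 hp2 h
      have e1 := Finset.mem_range.1 (Finset.mem_filter.1 hp1).1
      have e2 := Finset.mem_range.1 (Finset.mem_filter.1 hp2).1
      exact addmod_injOn (c S) n (Set.mem_Iio.2 (by omega)) (Set.mem_Iio.2 (by omega)) h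
    · intro q hq
      have hqn : q < n := Finset.mem_range.1 (hS hq)
      refine ⟨(q + n - c S % n) % n, ?_, crt_aux hn0 (c S) q hqn⟩
      rw [Finset.mem_filter, Finset.mem_range]
      have hplt : (q + n - c S % n) % n < n := Nat.mod_lt _ hn0
      have hpne : (q + n - c S % n) % n ≠ n - 1 := by
        intro hcontra
        have : (c S + (q + n - c S % n) % n) % n = q := crt_aux hn0 (c S) q hqn
        rw [hcontra] at this
        have h4 : c S + (n - 1) = (c S - 1) + n := by omega
        rw [h4, Nat.add_mod_right, Nat.mod_eq_of_lt hj1] at this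
        rw [← this] at hq
        exact hj2 hq
      constructor
      · omega
      · rw [crt_aux hn0 (c S) q hqn]; exact hq
  -- the key characterization
  have key : ∀ S ∈ (Finset.range n).powerset, ∀ q, q < n →
      (q ∈ S ↔ (a S (v q) = v ((q + 1) % n) ∨ b S (v q) = v ((q + 1) % n))) := by
    intro S hS q hq
    have hSsub := Finset.mem_powerset.1 hS
    by_cases hfull : S = Finset.range n
    · constructor
      · intro _
        left
        rw [ha]
        simp only [if_pos hfull]
        exact rperm_apply hinj hn0 hq
      · intro _
        rw [hfull]
        exact Finset.mem_range.2 hq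
    · obtain ⟨hj1, hj2, hj3⟩ := hjfact S hSsub hfull
      have haS : a S = mperm (w S) n (Mev (Sm S)) (hinjw S)
          (matchy_Mev (Finset.filter_subset _ _)) := by
        rw [ha]; simp only [if_neg hfull]
      have hbS : b S = mperm (w S) n (Mod' (Sm S)) (hinjw S)
          (matchy_Mod' (Finset.filter_subset _ _)) := by
        rw [hb]; simp only [if_neg hfull]
      set p : ℕ := (q + n - c S % n) % n with hp
      have hplt : p < n := Nat.mod_lt _ hn0
      have hpq : (c S + p) % n = q := crt_aux hn0 (c S) q hq
      have hwp : w S p = v q := by rw [hw]; simp only []; rw [hpq]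
      by_cases hpn : p = n - 1
      · -- q = c S - 1 = j, not in S; both permutations miss the target
        have hqj : q = c S - 1 := by
          rw [← hpq, hpn]
          have h4 : c S + (n - 1) = (c S - 1) + n := by omega
          rw [h4, Nat.add_mod_right, Nat.mod_eq_of_lt hj1]
        have hnotS : q ∉ S := hqj ▸ hj2
        have htgt : v ((q + 1) % n) = w S 0 := by
          rw [hw]
          simp only [Nat.add_zero]
          congr 1
          rw [hqj, ← hj3]
        constructor
        · intro h; exact absurd h hnotS
        · rintro (h | h)
          · rw [haS, ← hwp, htgt] at h
            rcases mperm_cases (hinjw S) (matchy_Mev (S := Sm S) (n := n) (Finset.filter_subset _ _)) hplt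
              with h1 | ⟨h1, _⟩ | ⟨h1, _, h3⟩
            · rw [h1] at h
              exact absurd (hinjw S (Set.mem_Iio.2 hplt) (Set.mem_Iio.2 hn0) h)
                (by omega)
            · have hx1 : p ∈ Sm S := Finset.filter_subset _ _ h1
              have hx2 : p < n - 1 := Finset.mem_range.1 (Finset.mem_filter.1 hx1).1
              omega
            · rw [h3] at h
              have := hinjw S (Set.mem_Iio.2 (by omega)) (Set.mem_Iio.2 hn0) h
              omega
          · rw [hbS, ← hwp, htgt] at h
            rcases mperm_cases (hinjw S) (matchy_Mod' (S := Sm S) (n := n) (Finset.filter_subset _ _)) hplt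
              with h1 | ⟨h1, _⟩ | ⟨h1, _, h3⟩
            · rw [h1] at h
              exact absurd (hinjw S (Set.mem_Iio.2 hplt) (Set.mem_Iio.2 hn0) h)
                (by omega)
            · have hx1 : p ∈ Sm S := Finset.filter_subset _ _ h1
              have hx2 : p < n - 1 := Finset.mem_range.1 (Finset.mem_filter.1 hx1).1
              omega
            · rw [h3] at h
              have := hinjw S (Set.mem_Iio.2 (by omega)) (Set.mem_Iio.2 hn0) h
              omega
      · -- p < n - 1 : the generic case
        have hp1 : p + 1 < n := by omega
        have htgt : v ((q + 1) % n) = w S (p + 1) := by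
          rw [hw]
          show v ((q + 1) % n) = v ((c S + (p + 1)) % n)
          congr 1
          rw [← hpq, Nat.mod_add_mod, Nat.add_assoc]
        have hmemSm : q ∈ S ↔ p ∈ Sm S := by
          rw [hSm]
          simp only [Finset.mem_filter, Finset.mem_range]
          constructor
          · intro h; exact ⟨by omega, hpq ▸ h⟩
          · intro h; exact hpq ▸ h.2
        rw [hmemSm, haS, hbS, ← hwp, htgt,
          mperm_eq_iff (hinjw S) (matchy_Mev (Finset.filter_subset _ _)) hp1,
          mperm_eq_iff (hinjw S) (matchy_Mod' (Finset.filter_subset _ _)) hp1]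
        conv_lhs => rw [← Mev_union_Mod' (Sm S)]
        rw [Finset.mem_union]
  apply Z_sq_le G α γ n a b
  · intro S hS
    have hSsub := Finset.mem_powerset.1 hS
    by_cases hfull : S = Finset.range n
    · have haS : a S = rperm v n hinj hn0 := by rw [ha]; simp only [if_pos hfull]
      have hbS : b S = (rperm v n hinj hn0)⁻¹ := by rw [hb]; simp only [if_pos hfull]
      have hrfix : ∀ x ∉ γ, rperm v n hinj hn0 x = x := fun x hx =>
        rperm_fix hinj hn0 (hfixγ x hx)
      rw [haS, hbS]
      refine ⟨rperm_adj hinj hn0 hcadj, inv_adj (rperm_adj hinj hn0 hcadj), hrfix,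
        inv_fix hrfix, fun x hx => rperm_maps hinj hn0 hmemγ hx, inv_maps hrfix, ?_⟩
      rw [en_inv, en_rperm hinj hn0 (by omega : 2 ≤ n), hfull, Finset.card_range]
      omega
    · have haS : a S = mperm (w S) n (Mev (Sm S)) (hinjw S)
          (matchy_Mev (Finset.filter_subset _ _)) := by
        rw [ha]; simp only [if_neg hfull]
      have hbS : b S = mperm (w S) n (Mod' (Sm S)) (hinjw S)
          (matchy_Mod' (Finset.filter_subset _ _)) := by
        rw [hb]; simp only [if_neg hfull]
      rw [haS, hbS]
      refine ⟨mperm_adj (hinjw S) _ (hadjw S), mperm_adj (hinjw S) _ (hadjw S),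
        fun x hx => mperm_fix (hinjw S) _ (hfixγw S x hx),
        fun x hx => mperm_fix (hinjw S) _ (hfixγw S x hx),
        fun x hx => mperm_maps (hinjw S) _ (fun p hp => hmemγw S p) hx,
        fun x hx => mperm_maps (hinjw S) _ (fun p hp => hmemγw S p) hx, ?_⟩
      rw [en_mperm (hinjw S) _, en_mperm (hinjw S) _]
      have h1 := card_Mev_add_Mod' (Sm S)
      have h2 := hcard S hSsub hfull
      omega
  · intro S hS T hT haeq hbeq
    ext q
    constructor
    · intro hqS
      have hq : q < n := Finset.mem_range.1 (Finset.mem_powerset.1 hS hqS)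
      have h1 := (key S hS q hq).1 hqS
      apply (key T hT q hq).2
      rcases h1 with h | h
      · exact Or.inl ((haeq (v q) (hmemγ q hq)).symm ▸ h)
      · exact Or.inr ((hbeq (v q) (hmemγ q hq)).symm ▸ h)
    · intro hqT
      have hq : q < n := Finset.mem_range.1 (Finset.mem_powerset.1 hT hqT)
      have h1 := (key T hT q hq).1 hqT
      apply (key S hS q hq).2
      rcases h1 with h | h
      · exact Or.inl ((haeq (v q) (hmemγ q hq)) ▸ h)
      · exact Or.inr ((hbeq (v q) (hmemγ q hq)) ▸ h)

section Final
variable {G : SimpleGraph V}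

lemma isGPerm_one (G : SimpleGraph V) (U : Finset V) : IsGPerm G U (1 : Equiv.Perm V) :=
  ⟨fun _ _ => rfl, fun _ => Or.inl rfl⟩

lemma Z_pos (G : SimpleGraph V) (α : ℝ) (U : Finset V) : 0 < Z G α U := by
  have h1 : Z G α U = ∑ π ∈ Finset.univ.filter (IsGPerm G U), wt α π :=
    (Finset.sum_filter _ _).symm
  rw [h1]
  apply Finset.sum_pos (fun π _ => wt_pos α π)
  exact ⟨1, Finset.mem_filter.2 ⟨Finset.mem_univ _, isGPerm_one G U⟩⟩

lemma final_bound (m : ℕ) {Z0 Z1 x : ℝ} (hZ0 : 0 < Z0) (hZ1 : 0 ≤ Z1) (hx : 0 < x)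
    (h : Z1 ^ 2 * (1 + x) ^ m ≤ Z0 ^ 2) :
    Z1 / Z0 ≤ (1 / (1 + x)) ^ ((m : ℝ) / 2) := by
  have h1x : (0:ℝ) < 1 + x := by linarith
  have hpow : (0:ℝ) < (1 + x) ^ m := pow_pos h1x m
  have hq : (Z1 / Z0) ^ 2 ≤ (1 / (1 + x)) ^ m := by
    have e : (1 / (1 + x)) ^ m = 1 / (1 + x) ^ m := by rw [div_pow, one_pow]
    rw [div_pow, e, div_le_div_iff₀ (pow_pos hZ0 2) hpow]
    linarith [h]
  have hbase : (0:ℝ) ≤ 1 / (1 + x) := by positivity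
  calc Z1 / Z0 = Real.sqrt ((Z1 / Z0) ^ 2) := (Real.sqrt_sq (div_nonneg hZ1 hZ0.le)).symm
    _ ≤ Real.sqrt ((1 / (1 + x)) ^ m) := Real.sqrt_le_sqrt hq
    _ = (1 / (1 + x)) ^ ((m : ℝ) / 2) := by
        rw [Real.sqrt_eq_rpow, ← Real.rpow_natCast (1 / (1 + x)) m, ← Real.rpow_mul hbase]
        congr 1
        ring

/-- The degenerate 2-cycle core estimate. -/
lemma core_two (G : SimpleGraph V) (α : ℝ) (v : ℕ → V)
    (hinj : Set.InjOn v (Set.Iio 2)) (hadj01 : G.Adj (v 0) (v 1)) :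
    Z G α (Finset.univ \ (Finset.range 2).image v) ^ 2 * (1 + Real.exp (-2 * α)) ^ 2
      ≤ Z G α Finset.univ ^ 2 := by
  classical
  set γ : Finset V := (Finset.range 2).image v with hγ
  have hmemγ : ∀ i, i < 2 → v i ∈ γ := fun i hi =>
    Finset.mem_image.2 ⟨i, Finset.mem_range.2 hi, rfl⟩
  have hfixγ : ∀ x, x ∉ γ → ∀ i, i < 2 → v i ≠ x := fun x hx i hi h => hx (h ▸ hmemγ i hi)
  have hadj : ∀ i, i + 1 < 2 → G.Adj (v i) (v (i + 1)) := by
    intro i hi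
    have hi0 : i = 0 := by omega
    rw [hi0]; exact hadj01
  have mm : Matchy 2 ({0} : Finset ℕ) := by
    constructor
    · intro i hi; simp only [Finset.mem_singleton] at hi; omega
    · intro i hi; simp only [Finset.mem_singleton] at hi ⊢; omega
  set sw : Equiv.Perm V := mperm v 2 {0} hinj mm with hsw
  have hsw0 : sw (v 0) = v 1 := mfun_mem hinj mm (Finset.mem_singleton_self 0)
  have hsw1 : sw (v 1) = v 0 := mfun_mem' hinj mm (Finset.mem_singleton_self 0)
  have hv01 : v 0 ≠ v 1 := hinj_ne hinj (by omega) (by omega) (by omega)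
  set a : Finset ℕ → Equiv.Perm V := fun S => if 0 ∈ S then sw else 1 with ha
  set b : Finset ℕ → Equiv.Perm V := fun S => if 1 ∈ S then sw else 1 with hb
  have hswadj : ∀ x, sw x = x ∨ G.Adj x (sw x) := mperm_adj hinj mm hadj
  have hswfix : ∀ x ∉ γ, sw x = x := fun x hx => mperm_fix hinj mm (hfixγ x hx)
  have hswmaps : ∀ x ∈ γ, sw x ∈ γ := fun x hx => mperm_maps hinj mm hmemγ hx
  have hswen : en sw = 2 := by
    rw [hsw, en_mperm hinj mm, Finset.card_singleton]
  have hcases : ∀ π : Equiv.Perm V, (π = sw ∨ π = 1) →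
      (∀ x, π x = x ∨ G.Adj x (π x)) ∧ (∀ x ∉ γ, π x = x) ∧ (∀ x ∈ γ, π x ∈ γ) := by
    rintro π (rfl | rfl)
    · exact ⟨hswadj, hswfix, hswmaps⟩
    · exact ⟨fun x => Or.inl rfl, fun x _ => rfl, fun x hx => hx⟩
  apply Z_sq_le G α γ 2 a b
  · intro S hS
    have hSsub := Finset.mem_powerset.1 hS
    have haS : a S = sw ∨ a S = 1 := by
      rw [ha]; by_cases h : 0 ∈ S
      · left; simp [h]
      · right; simp [h]
    have hbS : b S = sw ∨ b S = 1 := by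
      rw [hb]; by_cases h : 1 ∈ S
      · left; simp [h]
      · right; simp [h]
    obtain ⟨h1, h2, h3⟩ := hcases _ haS
    obtain ⟨h4, h5, h6⟩ := hcases _ hbS
    refine ⟨h1, h4, h2, h5, h3, h6, ?_⟩
    have hr2 : Finset.range 2 = ({0, 1} : Finset ℕ) := by decide
    rw [hr2] at hSsub
    have h01 : S = ∅ ∨ S = {0} ∨ S = {1} ∨ S = ({0, 1} : Finset ℕ) := by
      by_cases h0 : 0 ∈ S <;> by_cases hone : 1 ∈ S
      · refine Or.inr (Or.inr (Or.inr (Finset.Subset.antisymm hSsub ?_)))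
        intro i hi
        simp only [Finset.mem_insert, Finset.mem_singleton] at hi
        rcases hi with rfl | rfl
        · exact h0
        · exact hone
      · refine Or.inr (Or.inl (Finset.Subset.antisymm ?_ ?_))
        · intro i hi
          have hii := hSsub hi
          simp only [Finset.mem_insert, Finset.mem_singleton] at hii
          simp only [Finset.mem_singleton]
          rcases hii with rfl | rfl
          · rfl
          · exact absurd hi hone
        · intro i hi
          simp only [Finset.mem_singleton] at hi
          rw [hi]; exact h0
      · refine Or.inr (Or.inr (Or.inl (Finset.Subset.antisymm ?_ ?_)))
        · intro i hi
          have hii := hSsub hi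
          simp only [Finset.mem_insert, Finset.mem_singleton] at hii
          simp only [Finset.mem_singleton]
          rcases hii with rfl | rfl
          · exact absurd hi h0
          · rfl
        · intro i hi
          simp only [Finset.mem_singleton] at hi
          rw [hi]; exact hone
      · refine Or.inl (Finset.eq_empty_of_forall_notMem ?_)
        intro i hi
        have hii := hSsub hi
        simp only [Finset.mem_insert, Finset.mem_singleton] at hii
        rcases hii with rfl | rfl
        · exact h0 hi
        · exact hone hi
    rcases h01 with rfl | rfl | rfl | rfl
    · simp [ha, hb, en_one]
    · simp [ha, hb, en_one, hswen]
    · simp [ha, hb, en_one, hswen]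
    · simp [ha, hb, hswen]
  · intro S hS T hT haeq hbeq
    have h0 : 0 ∈ S ↔ 0 ∈ T := by
      have heq := haeq (v 0) (hmemγ 0 (by omega))
      by_cases h0S : 0 ∈ S <;> by_cases h0T : 0 ∈ T
      · exact iff_of_true h0S h0T
      · exfalso
        simp only [ha, if_pos h0S, if_neg h0T, hsw0, Equiv.Perm.one_apply] at heq
        exact hv01 heq.symm
      · exfalso
        simp only [ha, if_neg h0S, if_pos h0T, hsw0, Equiv.Perm.one_apply] at heq
        exact hv01 heq
      · exact iff_of_false h0S h0T
    have h1 : 1 ∈ S ↔ 1 ∈ T := by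
      have heq := hbeq (v 1) (hmemγ 1 (by omega))
      by_cases h1S : 1 ∈ S <;> by_cases h1T : 1 ∈ T
      · exact iff_of_true h1S h1T
      · exfalso
        simp only [hb, if_pos h1S, if_neg h1T, hsw1, Equiv.Perm.one_apply] at heq
        exact hv01 heq
      · exfalso
        simp only [hb, if_neg h1S, if_pos h1T, hsw1, Equiv.Perm.one_apply] at heq
        exact hv01 heq.symm
      · exact iff_of_false h1S h1T
    ext i
    have hiS := Finset.mem_powerset.1 hS
    have hiT := Finset.mem_powerset.1 hT
    constructor
    · intro h
      have hlt : i < 2 := Finset.mem_range.1 (hiS h)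
      interval_cases i
      · exact h0.1 h
      · exact h1.1 h
    · intro h
      have hlt : i < 2 := Finset.mem_range.1 (hiT h)
      interval_cases i
      · exact h0.2 h
      · exact h1.2 h

end Final

lemma list_setup (G : SimpleGraph V) (l : List V) (hne : l ≠ []) (hnodup : l.Nodup)
    (hchain : l.Chain' G.Adj) :
    ∃ v : ℕ → V, Set.InjOn v (Set.Iio l.length) ∧
      (∀ i, i + 1 < l.length → G.Adj (v i) (v (i + 1))) ∧
      l.toFinset = (Finset.range l.length).image v ∧
      l.head? = some (v 0) ∧ l.getLast? = some (v (l.length - 1)) := by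
  have hlen : 0 < l.length := List.length_pos_iff.2 hne
  refine ⟨fun i => l.getD i (l.head hne), ?_, ?_, ?_, ?_, ?_⟩
  · intro i hi j hj h
    simp only [Set.mem_Iio] at hi hj
    simp only [List.getD_eq_getElem l _ hi, List.getD_eq_getElem l _ hj] at h
    have h2 := List.nodup_iff_injective_get.1 hnodup
      (show l.get ⟨i, hi⟩ = l.get ⟨j, hj⟩ from h)
    exact congrArg Fin.val h2
  · intro i hi
    have hc := List.isChain_iff_getElem.1 hchain i (by omega)
    simp only [List.getD_eq_getElem l _ (show i < l.length by omega),
      List.getD_eq_getElem l _ hi]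
    exact hc
  · ext x
    simp only [List.mem_toFinset, Finset.mem_image, Finset.mem_range]
    constructor
    · intro hx
      obtain ⟨⟨i, hi⟩, hgx⟩ := List.mem_iff_get.1 hx
      exact ⟨i, hi, by simp only [List.getD_eq_getElem l _ hi]; exact hgx⟩
    · rintro ⟨i, hi, rfl⟩
      simp only [List.getD_eq_getElem l _ hi]
      exact List.getElem_mem hi
  · rw [List.head?_eq_head hne]
    congr 1
    simp only [List.getD_eq_getElem l _ hlen, List.head_eq_getElem]
  · rw [List.getLast?_eq_getLast hne]
    congr 1
    simp only [List.getD_eq_getElem l _ (show l.length - 1 < l.length by omega),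
      List.getLast_eq_getElem]

end Aux

/-- A (directed) self-avoiding path in `G`, given by its enumeration of vertices. -/
def IsSAPath {V : Type*} (G : SimpleGraph V) (l : List V) : Prop :=
  l ≠ [] ∧ l.Nodup ∧ l.Chain' G.Adj

/-- A (directed) self-avoiding cycle in `G`, given by its enumeration of vertices. -/
def IsSACycle {V : Type*} (G : SimpleGraph V) (l : List V) : Prop :=
  l.Nodup ∧ 2 ≤ l.length ∧ l.Chain' G.Adj ∧
    ∀ a b : V, l.head? = some a → l.getLast? = some b → G.Adj b a

/-- for a finite simple graph `G = (V,E)`, any `α ∈ ℝ` and any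
self-avoiding path or cycle `γ` (identified with its vertex set `l.toFinset`,
with `‖γ‖` edges), one has `Z(V ∖ γ)/Z(V) ≤ (1/(1+e^{-2α}))^{‖γ‖/2}`. -/
theorem ratio_partition_function_le {V : Type*} [Fintype V] [DecidableEq V]
    (G : SimpleGraph V) (α : ℝ) (l : List V) :
    (IsSAPath G l →
      Z G α (Finset.univ \ l.toFinset) / Z G α Finset.univ ≤
        (1 / (1 + Real.exp (-2 * α))) ^ (((l.length - 1 : ℕ) : ℝ) / 2)) ∧
    (IsSACycle G l →
      Z G α (Finset.univ \ l.toFinset) / Z G α Finset.univ ≤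
        (1 / (1 + Real.exp (-2 * α))) ^ ((l.length : ℝ) / 2)) := by
  constructor
  · rintro ⟨hne, hnodup, hchain⟩
    obtain ⟨v, hinj, hadj, hγ, -, -⟩ := list_setup G l hne hnodup hchain
    rw [hγ]
    exact final_bound (l.length - 1) (Z_pos G α _) (Z_pos G α _).le (Real.exp_pos _)
      (core_path G α v l.length hinj hadj)
  · rintro ⟨hnodup, hlen, hchain, hcyc⟩
    have hne : l ≠ [] := by
      intro h; rw [h] at hlen; simp at hlen
    obtain ⟨v, hinj, hadj, hγ, hhead, hlast⟩ := list_setup G l hne hnodup hchain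
    have hcadj : ∀ i, i < l.length → G.Adj (v i) (v ((i + 1) % l.length)) := by
      intro i hi
      by_cases h : i + 1 < l.length
      · rw [Nat.mod_eq_of_lt h]; exact hadj i h
      · have hi' : i = l.length - 1 := by omega
        have h0 : (i + 1) % l.length = 0 := by
          rw [hi', show l.length - 1 + 1 = l.length by omega, Nat.mod_self]
        rw [h0, hi']
        exact hcyc (v 0) (v (l.length - 1)) hhead hlast
    rw [hγ]
    by_cases h2 : l.length = 2
    · rw [h2]
      have hinj2 : Set.InjOn v (Set.Iio 2) := by rw [h2] at hinj; exact hinj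
      have hb := core_two G α v hinj2 (hadj 0 (by omega))
      exact final_bound 2 (Z_pos G α _) (Z_pos G α _).le (Real.exp_pos _) hb
    · have h3 : 3 ≤ l.length := by omega
      exact final_bound l.length (Z_pos G α _) (Z_pos G α _).le (Real.exp_pos _)
        (core_cycle G α v l.length h3 hinj hcadj)

end SRP
end
end

section
/- (Strong Markov property.) Let G = (V,E) be a finite simple graph, α ∈ ℝ, and let Q be an admissible random invariant set. For every B ⊆ V and every F_B-measurable f : S_V → ℝ, one has E_V(f | F_Q)·1{Q ∩ B = ∅} = E_V(f·1{Q ∩ B = ∅} | F_Q) = E_{Q^c}(f(· ⊕ id))·1{Q ∩ B = ∅}, P_V-almost surely. -/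
open scoped Classical BigOperators

noncomputable section

namespace SRP

variable {V : Type*} [Fintype V] [DecidableEq V]

/-- Two permutations agree on `A` (both forward and inverse images):
this generates the σ-algebra `F_A`. -/
def agreeOn (A : Finset V) (π π' : Equiv.Perm V) : Prop :=
  ∀ x ∈ A, π x = π' x ∧ π.symm x = π'.symm x

/-- An admissible random invariant set: `Q(π) ∈ Inv(π)` for every graph
permutation `π`, and the event `{Q = A}` is `F_A`-measurable for every `A`. -/
def AdmissibleRIS (G : SimpleGraph V) (Q : Equiv.Perm V → Finset V) : Prop :=
  (∀ π : Equiv.Perm V, IsGPerm G Finset.univ π → Finset.image (⇑π) (Q π) = Q π) ∧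
  ∀ A : Finset V, ∀ π π' : Equiv.Perm V, agreeOn A π π' → (Q π = A ↔ Q π' = A)

/-- The conditional expectation of `f` given the σ-algebra `F_Q`, evaluated at `π`:
the Gibbs-conditional expectation on the `F_Q`-atom of `π`, namely
`{π' : Q π' = Q π and π' agrees with π on Q π}`. -/
def condExpFQ (G : SimpleGraph V) (α : ℝ) (Q : Equiv.Perm V → Finset V)
    (f : Equiv.Perm V → ℝ) (π : Equiv.Perm V) : ℝ :=
  condE G α Finset.univ f (fun π' => Q π' = Q π ∧ agreeOn (Q π) π π')

/-- Strong Markov property. For a finite simple graph `G = (V,E)`,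
`α ∈ ℝ`, an admissible random invariant set `Q`, `B ⊆ V` and `F_B`-measurable `f`:
`E_V(f | F_Q) 1{Q ∩ B = ∅} = E_V(f 1{Q ∩ B = ∅} | F_Q) = E_{Qᶜ}(f(·⊕id)) 1{Q ∩ B = ∅}`,
`P_V`-almost surely (i.e. at every point `π` of the support of `P_V`, which consists
exactly of the graph permutations). -/
theorem strong_markov_property (G : SimpleGraph V) (α : ℝ)
    (Q : Equiv.Perm V → Finset V) (hQ : AdmissibleRIS G Q)
    (B : Finset V) (f : Equiv.Perm V → ℝ) (hf : MeasOn B f) :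
    ∀ π : Equiv.Perm V, IsGPerm G Finset.univ π →
      condExpFQ G α Q f π * (if Q π ∩ B = ∅ then (1:ℝ) else 0)
          = condExpFQ G α Q (fun π' => f π' * (if Q π' ∩ B = ∅ then (1:ℝ) else 0)) π
      ∧ condExpFQ G α Q (fun π' => f π' * (if Q π' ∩ B = ∅ then (1:ℝ) else 0)) π
          = EU G α (Q π)ᶜ f * (if Q π ∩ B = ∅ then (1:ℝ) else 0) := by
  intro π hπ
  classical
  have hinv : Finset.image (⇑π) (Q π) = Q π := hQ.1 π hπ
  have hmem : ∀ x : V, x ∈ Q π ↔ π x ∈ Q π := by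
    intro x
    constructor
    · intro hx
      have := Finset.mem_image_of_mem (⇑π) hx
      rwa [hinv] at this
    · intro hx
      rw [← hinv] at hx
      obtain ⟨y, hy, hyx⟩ := Finset.mem_image.mp hx
      rwa [← π.injective hyx]
  have hmem' : ∀ x : V, x ∈ Q π ↔ π.symm x ∈ Q π := by
    intro x
    conv_lhs => rw [← π.apply_symm_apply x]
    exact (hmem _).symm
  have hex : ∃ πA : Equiv.Perm V, (∀ x ∈ Q π, πA x = π x) ∧ (∀ x ∉ Q π, πA x = x) ∧
      (∀ x ∈ Q π, πA.symm x = π.symm x) ∧ (∀ x ∉ Q π, πA.symm x = x) := by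
    refine ⟨{ toFun := fun x => if x ∈ Q π then π x else x
              invFun := fun x => if x ∈ Q π then π.symm x else x
              left_inv := ?_
              right_inv := ?_ }, ?_, ?_, ?_, ?_⟩
    · intro x
      by_cases hx : x ∈ Q π
      · simp [hx, (hmem x).mp hx]
      · simp [hx]
    · intro x
      by_cases hx : x ∈ Q π
      · simp [hx, (hmem' x).mp hx]
      · simp [hx]
    · intro x hx; simp [hx]
    · intro x hx; simp [hx]
    · intro x hx
      rw [Equiv.coe_fn_symm_mk]
      exact if_pos hx
    · intro x hx
      rw [Equiv.coe_fn_symm_mk]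
      exact if_neg hx
  obtain ⟨πA, hπA1, hπA2, hπAs1, hπAs2⟩ := hex
  have hfix : ∀ τ : Equiv.Perm V, IsGPerm G (Q π)ᶜ τ → ∀ x ∈ Q π, τ x = x := by
    intro τ hτ x hx
    exact hτ.1 x (by simp [Finset.mem_compl, hx])
  have hmoves : ∀ τ : Equiv.Perm V, IsGPerm G (Q π)ᶜ τ → ∀ x, x ∉ Q π → τ x ∉ Q π := by
    intro τ hτ x hx hmem2
    have h1 : τ (τ x) = τ x := hfix τ hτ (τ x) hmem2
    exact hx ((τ.injective h1) ▸ hmem2)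
  have hs1 : ∀ τ : Equiv.Perm V, IsGPerm G (Q π)ᶜ τ → ∀ x ∈ Q π, (πA * τ) x = π x := by
    intro τ hτ x hx
    rw [Equiv.Perm.mul_apply, hfix τ hτ x hx, hπA1 x hx]
  have hs2 : ∀ τ : Equiv.Perm V, IsGPerm G (Q π)ᶜ τ → ∀ x, x ∉ Q π → (πA * τ) x = τ x := by
    intro τ hτ x hx
    rw [Equiv.Perm.mul_apply, hπA2 _ (hmoves τ hτ x hx)]
  have hss1 : ∀ τ : Equiv.Perm V, IsGPerm G (Q π)ᶜ τ → ∀ x ∈ Q π,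
      (πA * τ).symm x = π.symm x := by
    intro τ hτ x hx
    rw [Equiv.symm_apply_eq, hs1 τ hτ _ ((hmem' x).mp hx), Equiv.apply_symm_apply]
  have hss2 : ∀ τ : Equiv.Perm V, IsGPerm G (Q π)ᶜ τ → ∀ x, x ∉ Q π →
      (πA * τ).symm x = τ.symm x := by
    intro τ hτ x hx
    have h1 : τ.symm x ∉ Q π := by
      intro h2
      have h3 : τ (τ.symm x) = τ.symm x := hfix τ hτ _ h2
      rw [Equiv.apply_symm_apply] at h3
      exact hx (h3 ▸ h2)
    rw [Equiv.symm_apply_eq, hs2 τ hτ _ h1, Equiv.apply_symm_apply]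
  have hagree : ∀ τ : Equiv.Perm V, IsGPerm G (Q π)ᶜ τ → agreeOn (Q π) π (πA * τ) :=
    fun τ hτ x hx => ⟨(hs1 τ hτ x hx).symm, (hss1 τ hτ x hx).symm⟩
  have hQσ : ∀ τ : Equiv.Perm V, IsGPerm G (Q π)ᶜ τ → Q (πA * τ) = Q π :=
    fun τ hτ => (hQ.2 (Q π) π (πA * τ) (hagree τ hτ)).mp rfl
  have hGσ : ∀ τ : Equiv.Perm V, IsGPerm G (Q π)ᶜ τ → IsGPerm G Finset.univ (πA * τ) := by
    intro τ hτ
    refine ⟨fun x hx => absurd (Finset.mem_univ x) hx, fun x => ?_⟩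
    by_cases hx : x ∈ Q π
    · rw [hs1 τ hτ x hx]; exact hπ.2 x
    · rw [hs2 τ hτ x hx]; exact hτ.2 x
  have hback : ∀ τ : Equiv.Perm V, IsGPerm G Finset.univ (πA * τ) →
      agreeOn (Q π) π (πA * τ) → IsGPerm G (Q π)ᶜ τ := by
    intro τ hg hag
    have hfixτ : ∀ x ∈ Q π, τ x = x := by
      intro x hx
      have h1 : πA (τ x) = π x := by
        have := (hag x hx).1.symm
        rwa [Equiv.Perm.mul_apply] at this
      have h2 : τ x = πA.symm (π x) := by rw [← h1, Equiv.symm_apply_apply]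
      rw [h2, hπAs1 _ ((hmem x).mp hx), Equiv.symm_apply_apply]
    refine ⟨fun x hx => hfixτ x (by simpa [Finset.mem_compl] using hx), fun x => ?_⟩
    by_cases hx : x ∈ Q π
    · exact Or.inl (hfixτ x hx)
    · have hσ : (πA * τ) x ∉ Q π := by
        intro h2
        have h3 := (hag _ h2).2
        rw [Equiv.symm_apply_apply] at h3
        exact hx (h3 ▸ (hmem' _).mp h2)
      have hτx : τ x ∉ Q π := by
        intro h4
        have h5 : (πA * τ) x = π (τ x) := by rw [Equiv.Perm.mul_apply, hπA1 _ h4]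
        exact hσ (h5 ▸ (hmem _).mp h4)
      have he : τ x = (πA * τ) x := by rw [Equiv.Perm.mul_apply, hπA2 _ hτx]
      rw [he]
      exact hg.2 x
  have hsplit : ∀ (p : V → Prop) [DecidablePred p],
      (Finset.univ.filter p).card = ((Q π).filter p).card + (((Q π)ᶜ).filter p).card := by
    intro p _
    rw [← Finset.card_union_of_disjoint (Finset.disjoint_filter_filter disjoint_compl_right),
      ← Finset.filter_union, Finset.union_compl]
  have hen : ∀ τ : Equiv.Perm V, IsGPerm G (Q π)ᶜ τ →
      en (πA * τ) = ((Q π).filter fun x => π x ≠ x).card + en τ := by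
    intro τ hτ
    rw [en, en, hsplit, hsplit]
    have e1 : (Q π).filter (fun x => (πA * τ) x ≠ x) = (Q π).filter (fun x => π x ≠ x) :=
      Finset.filter_congr (fun x hx => by rw [hs1 τ hτ x hx])
    have e2 : ((Q π)ᶜ).filter (fun x => (πA * τ) x ≠ x)
        = ((Q π)ᶜ).filter (fun x => τ x ≠ x) :=
      Finset.filter_congr (fun x hx => by rw [hs2 τ hτ x (Finset.mem_compl.mp hx)])
    have e3 : (Q π).filter (fun x => τ x ≠ x) = ∅ :=
      Finset.filter_eq_empty_iff.mpr (fun x hx => not_not_intro (hfix τ hτ x hx))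
    rw [e1, e2, e3]
    simp
  have hwt : ∀ τ : Equiv.Perm V, IsGPerm G (Q π)ᶜ τ →
      wt α (πA * τ)
        = Real.exp (-α * (((Q π).filter fun x => π x ≠ x).card : ℝ)) * wt α τ := by
    intro τ hτ
    rw [wt, wt, hen τ hτ, ← Real.exp_add]
    congr 1
    push_cast
    ring
  have key : ∀ g : Equiv.Perm V → ℝ, (∀ τ : Equiv.Perm V, IsGPerm G (Q π)ᶜ τ →
        g (πA * τ) = g τ) →
      (∑ σ : Equiv.Perm V, if IsGPerm G Finset.univ σ ∧ (Q σ = Q π ∧ agreeOn (Q π) π σ)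
          then wt α σ * g σ else 0)
        = Real.exp (-α * (((Q π).filter fun x => π x ≠ x).card : ℝ))
            * gsum G α ((Q π)ᶜ) g := by
    intro g hg
    rw [gsum, Finset.mul_sum]
    refine (Fintype.sum_equiv (Equiv.mulLeft πA) _ _ ?_).symm
    intro τ
    simp only [Equiv.coe_mulLeft]
    change _ = if IsGPerm G Finset.univ (πA * τ) ∧ Q (πA * τ) = Q π ∧ agreeOn (Q π) π (πA * τ)
      then _ else _
    by_cases hτ : IsGPerm G ((Q π)ᶜ) τ
    · rw [if_pos hτ, if_pos ⟨hGσ τ hτ, hQσ τ hτ, hagree τ hτ⟩, hwt τ hτ, hg τ hτ]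
      ring
    · rw [if_neg hτ, if_neg fun h => hτ (hback τ h.1 h.2.2), mul_zero]
  have hZ : gsum G α ((Q π)ᶜ) (fun _ => (1:ℝ)) = Z G α ((Q π)ᶜ) := by
    rw [Z, gsum]
    exact Finset.sum_congr rfl fun σ _ => by simp
  have key1 : (∑ σ : Equiv.Perm V, if IsGPerm G Finset.univ σ ∧ (Q σ = Q π ∧ agreeOn (Q π) π σ)
        then wt α σ else 0)
      = Real.exp (-α * (((Q π).filter fun x => π x ≠ x).card : ℝ)) * Z G α ((Q π)ᶜ) := by
    rw [Z, Finset.mul_sum]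
    refine (Fintype.sum_equiv (Equiv.mulLeft πA) _ _ ?_).symm
    intro τ
    simp only [Equiv.coe_mulLeft]
    change _ = if IsGPerm G Finset.univ (πA * τ) ∧ Q (πA * τ) = Q π ∧ agreeOn (Q π) π (πA * τ)
      then _ else _
    by_cases hτ : IsGPerm G ((Q π)ᶜ) τ
    · rw [if_pos hτ, if_pos ⟨hGσ τ hτ, hQσ τ hτ, hagree τ hτ⟩, hwt τ hτ]
    · rw [if_neg hτ, if_neg fun h => hτ (hback τ h.1 h.2.2), mul_zero]
  have hcomb1 : gsum G α Finset.univ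
      (fun π' => if (Q π' = Q π ∧ agreeOn (Q π) π π') then (1:ℝ) else 0)
        = ∑ σ : Equiv.Perm V, if IsGPerm G Finset.univ σ ∧ (Q σ = Q π ∧ agreeOn (Q π) π σ)
            then wt α σ else 0 := by
    rw [gsum]
    refine Finset.sum_congr rfl fun σ _ => ?_
    by_cases h1 : IsGPerm G Finset.univ σ <;>
      by_cases h2 : Q σ = Q π ∧ agreeOn (Q π) π σ <;> simp [h1, h2]
  have hcomb : ∀ g : Equiv.Perm V → ℝ,
      gsum G α Finset.univ (fun π' => if (Q π' = Q π ∧ agreeOn (Q π) π π') then g π' else 0)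
        = ∑ σ : Equiv.Perm V, if IsGPerm G Finset.univ σ ∧ (Q σ = Q π ∧ agreeOn (Q π) π σ)
            then wt α σ * g σ else 0 := by
    intro g
    rw [gsum]
    refine Finset.sum_congr rfl fun σ _ => ?_
    by_cases h1 : IsGPerm G Finset.univ σ <;>
      by_cases h2 : Q σ = Q π ∧ agreeOn (Q π) π σ <;> simp [h1, h2]
  have hcore : Q π ∩ B = ∅ → condExpFQ G α Q f π = EU G α ((Q π)ᶜ) f := by
    intro hB
    have hBc : ∀ x ∈ B, x ∉ Q π := by
      intro x hxB hxA
      have : x ∈ Q π ∩ B := Finset.mem_inter.mpr ⟨hxA, hxB⟩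
      rw [hB] at this
      exact absurd this (Finset.notMem_empty x)
    have hgf : ∀ τ : Equiv.Perm V, IsGPerm G ((Q π)ᶜ) τ → f (πA * τ) = f τ := by
      intro τ hτ
      exact hf _ _ fun x hx => ⟨hs2 τ hτ x (hBc x hx), hss2 τ hτ x (hBc x hx)⟩
    simp only [condExpFQ, condE, EU]
    have hfin := mul_div_mul_left (gsum G α ((Q π)ᶜ) f) (Z G α ((Q π)ᶜ))
      (Real.exp_ne_zero (-α * (((Q π).filter fun x => π x ≠ x).card : ℝ)))
    rw [← hfin]
    congr 1
    · refine Eq.trans ?_ (key f hgf)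
      rw [gsum]
      refine Finset.sum_congr rfl fun σ _ => ?_
      by_cases h1 : IsGPerm G Finset.univ σ <;>
        by_cases h2 : Q σ = Q π ∧ agreeOn (Q π) π σ <;> simp [h1, h2]
    · refine Eq.trans ?_ key1
      rw [gsum]
      refine Finset.sum_congr rfl fun σ _ => ?_
      by_cases h1 : IsGPerm G Finset.univ σ <;>
        by_cases h2 : Q σ = Q π ∧ agreeOn (Q π) π σ <;> simp [h1, h2]
  have eq1 : condExpFQ G α Q f π * (if Q π ∩ B = ∅ then (1:ℝ) else 0)
      = condExpFQ G α Q (fun π' => f π' * (if Q π' ∩ B = ∅ then (1:ℝ) else 0)) π := by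
    simp only [condExpFQ, condE]
    have hnum : gsum G α Finset.univ
        (fun π' => if (Q π' = Q π ∧ agreeOn (Q π) π π')
          then f π' * (if Q π' ∩ B = ∅ then (1:ℝ) else 0) else 0)
      = (if Q π ∩ B = ∅ then (1:ℝ) else 0) * gsum G α Finset.univ
        (fun π' => if (Q π' = Q π ∧ agreeOn (Q π) π π') then f π' else 0) := by
      rw [gsum, gsum, Finset.mul_sum]
      refine Finset.sum_congr rfl fun σ _ => ?_
      by_cases h1 : IsGPerm G Finset.univ σ
      · rw [if_pos h1, if_pos h1]
        by_cases h2 : Q σ = Q π ∧ agreeOn (Q π) π σ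
        · rw [if_pos h2, if_pos h2, h2.1]
          ring
        · rw [if_neg h2, if_neg h2]
          ring
      · rw [if_neg h1, if_neg h1, mul_zero]
    rw [hnum, mul_div_assoc, mul_comm]
    congr 2
    · congr 1
      funext σ
      by_cases h2 : Q σ = Q π ∧ agreeOn (Q π) π σ <;> simp [h2]
  refine ⟨eq1, ?_⟩
  rw [← eq1]
  by_cases hB : Q π ∩ B = ∅
  · rw [if_pos hB, mul_one, mul_one, hcore hB]
  · rw [if_neg hB, mul_zero, mul_zero]

end SRP
end
end

section
/- Let L ∈ ℕ, δ > 0, A ⊆ Λ_n, and x, y ∈ A with ȳ = x̄ + L. Let γ be a self-avoiding nearest-neighbour path in A from x to y, and assume |γ| < (1+δ)·L, where |γ| is the number of vertices of γ. Then γ has at least (1 − 3δ)·L pre-regeneration points. -/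
open scoped Classical BigOperators ENNReal

noncomputable section

namespace SRP

/-- The vertex set of the cylinder `Λ_n = [0,n] × (−n/2, n/2]^{d−1} ∩ ℤ^d`,
with the transverse coordinates taken modulo `n` (periodic boundary
conditions). -/
abbrev Cyl (d n : ℕ) : Type := Fin (n + 1) × (Fin (d - 1) → ZMod n)

/-- The nearest-neighbour graph on the cylinder `Λ_n` with periodic boundary
conditions in the last `d − 1` coordinates. -/
def cylGraph (d n : ℕ) : SimpleGraph (Cyl d n) where
  Adj x y := x ≠ y ∧
    ((x.2 = y.2 ∧ ((x.1 : ℕ) + 1 = (y.1 : ℕ) ∨ (y.1 : ℕ) + 1 = (x.1 : ℕ))) ∨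
     (x.1 = y.1 ∧ ∃ j : Fin (d - 1), (∀ k : Fin (d - 1), k ≠ j → x.2 k = y.2 k) ∧
        (x.2 j = y.2 j + 1 ∨ y.2 j = x.2 j + 1)))
  symm := by
    constructor
    rintro x y ⟨hne, h⟩
    refine ⟨hne.symm, ?_⟩
    rcases h with ⟨h1, h2⟩ | ⟨h1, j, hk, h2⟩
    · exact Or.inl ⟨h1.symm, h2.symm⟩
    · exact Or.inr ⟨h1.symm, j, fun k hk' => (hk k hk').symm, h2.symm⟩
  loopless := by
    constructor
    rintro x ⟨hne, -⟩
    exact hne rfl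

variable (d n : ℕ) [NeZero n]

/-- `S_A^{a→z}`: maps `π` on the cylinder fixing the complement of `A`
pointwise, with `π` restricted to `A ∖ {z}` a bijection onto `A ∖ {a}`,
`π z = z`, and every point moved to itself or a neighbour. -/
def IsOpenPerm (A : Finset (Cyl d n)) (a z : Cyl d n)
    (π : Cyl d n → Cyl d n) : Prop :=
  a ∈ A ∧ z ∈ A ∧ (∀ x ∉ A, π x = x) ∧ π z = z ∧
    Set.BijOn π ↑(A.erase z) ↑(A.erase a) ∧
    ∀ x ∈ A, π x = x ∨ (cylGraph d n).Adj x (π x)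

/-- `S_A^{a→ℓ_n} = ∪_{z ∈ ℓ_n} S_{A∪{z}}^{a→z}`. -/
def IsOpenPermL (A : Finset (Cyl d n)) (a : Cyl d n)
    (π : Cyl d n → Cyl d n) : Prop :=
  ∃ z : Cyl d n, z.1 = Fin.last n ∧ IsOpenPerm d n (insert z A) a z π

/-- The energy `Σ_x |π(x) − x| = Σ_x 1{π x ≠ x}`. -/
def enC (π : Cyl d n → Cyl d n) : ℕ :=
  (Finset.univ.filter fun x => π x ≠ x).card

/-- The partition function `Z^{a→z}(A)`. -/
def ZP (α : ℝ) (A : Finset (Cyl d n)) (a z : Cyl d n) : ℝ :=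
  ∑ π : Cyl d n → Cyl d n,
    if IsOpenPerm d n A a z π then Real.exp (-α * enC d n π) else 0

/-- The partition function `Z^{a→ℓ_n}(A)`. -/
def ZL (α : ℝ) (A : Finset (Cyl d n)) (a : Cyl d n) : ℝ :=
  ∑ π : Cyl d n → Cyl d n,
    if IsOpenPermL d n A a π then Real.exp (-α * enC d n π) else 0

/-- The expectation `E_A^{a→z}(f)`. -/
def EP (α : ℝ) (A : Finset (Cyl d n)) (a z : Cyl d n)
    (f : (Cyl d n → Cyl d n) → ℝ) : ℝ :=
  (∑ π : Cyl d n → Cyl d n,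
      if IsOpenPerm d n A a z π then Real.exp (-α * enC d n π) * f π else 0) /
    ZP d n α A a z

/-- The expectation `E_A^{a→ℓ_n}(f)`. -/
def EL (α : ℝ) (A : Finset (Cyl d n)) (a : Cyl d n)
    (f : (Cyl d n → Cyl d n) → ℝ) : ℝ :=
  (∑ π : Cyl d n → Cyl d n,
      if IsOpenPermL d n A a π then Real.exp (-α * enC d n π) * f π else 0) /
    ZL d n α A a

/-- The probability `P_A^{a→ℓ_n}(S)`. -/
def PL (α : ℝ) (A : Finset (Cyl d n)) (a : Cyl d n)
    (S : (Cyl d n → Cyl d n) → Prop) : ℝ :=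
  EL d n α A a fun π => if S π then 1 else 0

/-- The conditional expectation `E_A^{a→ℓ_n}(f | ev)`. -/
def condEL (α : ℝ) (A : Finset (Cyl d n)) (a : Cyl d n)
    (f : (Cyl d n → Cyl d n) → ℝ) (ev : (Cyl d n → Cyl d n) → Prop) : ℝ :=
  (∑ π : Cyl d n → Cyl d n,
      if IsOpenPermL d n A a π ∧ ev π then Real.exp (-α * enC d n π) * f π else 0) /
    ∑ π : Cyl d n → Cyl d n,
      if IsOpenPermL d n A a π ∧ ev π then Real.exp (-α * enC d n π) else 0

/-- The conditional probability `P_A^{a→ℓ_n}(S | ev)`. -/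
def condPL (α : ℝ) (A : Finset (Cyl d n)) (a : Cyl d n)
    (S ev : (Cyl d n → Cyl d n) → Prop) : ℝ :=
  condEL d n α A a (fun π => if S π then 1 else 0) ev

/-- `y` lies on the trace `γ(π) = {π^i(x) : i ∈ ℕ}` of the walk started at `x`. -/
def reaches (π : Cyl d n → Cyl d n) (x y : Cyl d n) : Prop :=
  ∃ i : ℕ, π^[i] x = y

/-- The toroidal distance on `ZMod n`. -/
def tdist (a b : ZMod n) : ℕ := min (a - b).val (b - a).val

/-- The (sup-norm) toroidal distance between the transverse coordinates `x̂, ŷ`. -/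
def hatDist (x y : Cyl d n) : ℕ :=
  Finset.univ.sup fun j : Fin (d - 1) => tdist n (x.2 j) (y.2 j)

/-- The transverse norm `|x̂|` (distance of `x̂` to `0`). -/
def hatNorm (x : Cyl d n) : ℕ :=
  Finset.univ.sup fun j : Fin (d - 1) => min (x.2 j).val (n - (x.2 j).val)

/-- The broadened forward cone `C_y`. -/
def inCone (y z : Cyl d n) : Prop :=
  (y.1 : ℕ) + hatDist d n y z ≤ (z.1 : ℕ) ∨
    ((y.1 : ℕ) : ℝ) + Real.log n ≤ ((z.1 : ℕ) : ℝ)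

/-- `A` is weakly `y`-admissible: it contains `{x : x̄ ≥ ȳ + log n}`. -/
def weakAdm (y : Cyl d n) (A : Finset (Cyl d n)) : Prop :=
  ∀ x : Cyl d n, ((y.1 : ℕ) : ℝ) + Real.log n ≤ ((x.1 : ℕ) : ℝ) → x ∈ A

/-- `A` is `y`-admissible: weakly `y`-admissible and containing the forward ray
`{x : x̄ ≥ ȳ, x̂ = ŷ}`. -/
def yAdm (y : Cyl d n) (A : Finset (Cyl d n)) : Prop :=
  weakAdm d n y A ∧ ∀ x : Cyl d n, (y.1 : ℕ) ≤ (x.1 : ℕ) → x.2 = y.2 → x ∈ A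

/-- `A` is strictly `y`-admissible: `y`-admissible and containing the forward
cone `C_y`. -/
def strictAdm (y : Cyl d n) (A : Finset (Cyl d n)) : Prop :=
  yAdm d n y A ∧ ∀ x : Cyl d n, inCone d n y x → x ∈ A

end SRP

namespace SRP

variable (d n : ℕ) [NeZero n]

/-- The `i`-th point of the self-avoiding path `l` is a pre-regeneration point:
all later points lie in its forward cone and all earlier points have strictly
smaller first coordinate. -/
def isPreRegIdx (l : List (Cyl d n)) (i : Fin l.length) : Prop :=
  (∀ j : Fin l.length, i < j → inCone d n (l.get i) (l.get j)) ∧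
  (∀ j : Fin l.length, j < i → ((l.get j).1 : ℕ) < ((l.get i).1 : ℕ))


lemma val_add_one_le (a : ZMod n) : (a + 1).val ≤ a.val + 1 := by
  have h1 : (1 : ZMod n).val ≤ 1 := by
    rw [ZMod.val_one_eq_one_mod]
    exact Nat.mod_le 1 n
  have := ZMod.val_add_le a 1
  omega

lemma tdist_comm (a b : ZMod n) : tdist n a b = tdist n b a := Nat.min_comm _ _

lemma tdist_self (a : ZMod n) : tdist n a a = 0 := by simp [tdist]

lemma tdist_add_one (a b : ZMod n) : tdist n a (b + 1) ≤ tdist n a b + 1 := by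
  rcases eq_or_ne a b with rfl | hab
  · have : tdist n a (a + 1) ≤ ((a + 1) - a).val := Nat.min_le_right _ _
    have h2 : ((a + 1) - a) = (1 : ZMod n) := by ring
    have h3 : (1 : ZMod n).val ≤ 1 := by
      rw [ZMod.val_one_eq_one_mod]; exact Nat.mod_le 1 n
    rw [tdist_self]
    rw [h2] at this
    omega
  · have hu : (a - b) ≠ 0 := sub_ne_zero.mpr hab
    have hupos : 0 < (a - b).val := ZMod.val_pos.mpr hu
    have h1 : (a - (b + 1)).val = (a - b).val - 1 := by
      have e : a - (b + 1) = (((a - b).val - 1 : ℕ) : ZMod n) := by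
        rw [Nat.cast_sub (by omega), ZMod.natCast_zmod_val, Nat.cast_one]
        ring
      rw [e, ZMod.val_cast_of_lt]
      have := ZMod.val_lt (a - b)
      omega
    have h2 : ((b + 1) - a).val ≤ (b - a).val + 1 := by
      have e : (b + 1) - a = (b - a) + 1 := by ring
      rw [e]
      exact val_add_one_le n _
    have m1 : tdist n a (b+1) ≤ (a - (b+1)).val := Nat.min_le_left _ _
    have m2 : tdist n a (b+1) ≤ ((b+1) - a).val := Nat.min_le_right _ _
    have m3 : tdist n a b = min (a-b).val (b-a).val := rfl
    omega

lemma tdist_sub_one (a b : ZMod n) : tdist n a (b - 1) ≤ tdist n a b + 1 := by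
  have e1 : a - (b - 1) = (a + 1) - b := by ring
  have e2 : (b - 1) - a = b - (a + 1) := by ring
  have : tdist n a (b - 1) = tdist n (a + 1) b := by
    unfold tdist; rw [e1, e2]
  rw [this, tdist_comm]
  calc tdist n b (a + 1) ≤ tdist n b a + 1 := tdist_add_one n b a
    _ = tdist n a b + 1 := by rw [tdist_comm]

lemma hatDist_self (y : Cyl d n) : hatDist d n y y = 0 := by
  refine Nat.le_zero.mp (Finset.sup_le fun j _ => ?_)
  simp [tdist_self]

lemma hatDist_congr (y z z' : Cyl d n) (h : z.2 = z'.2) :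
    hatDist d n y z = hatDist d n y z' := by
  unfold hatDist; rw [h]

lemma hatDist_adj (y z z' : Cyl d n) (j : Fin (d-1))
    (hk : ∀ k : Fin (d-1), k ≠ j → z.2 k = z'.2 k)
    (hj : z.2 j = z'.2 j + 1 ∨ z'.2 j = z.2 j + 1) :
    hatDist d n y z' ≤ hatDist d n y z + 1 := by
  refine Finset.sup_le fun k _ => ?_
  rcases eq_or_ne k j with rfl | hkj
  · have hle : tdist n (y.2 k) (z.2 k) ≤ hatDist d n y z :=
      Finset.le_sup (f := fun j => tdist n (y.2 j) (z.2 j)) (Finset.mem_univ k)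
    rcases hj with h | h
    · have : z'.2 k = z.2 k - 1 := by rw [h]; ring
      rw [this]
      have := tdist_sub_one n (y.2 k) (z.2 k)
      omega
    · rw [h]
      have := tdist_add_one n (y.2 k) (z.2 k)
      omega
  · rw [← hk k hkj]
    have hle : tdist n (y.2 k) (z.2 k) ≤ hatDist d n y z := by
      exact Finset.le_sup (f := fun j => tdist n (y.2 j) (z.2 j)) (Finset.mem_univ k)
    omega

/-- Ballot-type counting for ±1 walks. -/
lemma walk_count (N : ℕ) (hN : 0 < N) (s : ℕ → ℤ) (hs0 : s 0 = 0)
    (hstep : ∀ k, s (k+1) = s k + 1 ∨ s (k+1) = s k - 1) :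
    s (N-1) - ((Finset.range (N-1)).filter fun k => s (k+1) = s k - 1).card ≤
      ((Finset.univ.filter fun i : Fin N =>
        (∀ j : Fin N, j < i → s j.1 < s i.1) ∧ ∀ j : Fin N, i ≤ j → s i.1 ≤ s j.1).card : ℤ) := by
  classical
  set V := s (N-1) with hV
  set Dn := (Finset.range (N-1)).filter fun k => s (k+1) = s k - 1 with hDn
  set D : Finset ℤ := Dn.image fun k => s k with hD
  set C : Finset ℤ := (Finset.Icc 1 V) \ D with hC
  set T := Finset.univ.filter fun i : Fin N =>
        (∀ j : Fin N, j < i → s j.1 < s i.1) ∧ ∀ j : Fin N, i ≤ j → s i.1 ≤ s j.1 with hT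
  have hex : ∀ t ∈ C, ∃ i : Fin N,
      ((∀ j : Fin N, j < i → s j.1 < s i.1) ∧ ∀ j : Fin N, i ≤ j → s i.1 ≤ s j.1) ∧ s i.1 = t := by
    intro t ht
    rw [hC, Finset.mem_sdiff, Finset.mem_Icc] at ht
    obtain ⟨⟨h1t, htV⟩, htD⟩ := ht
    have hexk : ∃ k, t ≤ s k := ⟨N-1, htV⟩
    set i := Nat.find hexk with hi
    have hispec : t ≤ s i := Nat.find_spec hexk
    have hmin : ∀ j < i, s j < t := fun j hj => lt_of_not_ge (Nat.find_min hexk hj)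
    have hiN : i < N := by
      have : i ≤ N - 1 := Nat.find_le htV
      omega
    have hipos : 0 < i := by
      rcases Nat.eq_zero_or_pos i with h0 | h
      · exfalso; rw [h0, hs0] at hispec; omega
      · exact h
    obtain ⟨m, hm⟩ : ∃ m, i = m + 1 := ⟨i - 1, by omega⟩
    have hsi : s i = t := by
      have h1 := hmin m (by omega)
      rw [hm] at hispec ⊢
      rcases hstep m with h2 | h2 <;> omega
    have hfut : ∀ j, i ≤ j → j < N → t ≤ s j := by
      intro j
      induction j with
      | zero => intro hij _; omega
      | succ m' ih =>
        intro hij hjN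
        rcases Nat.lt_or_ge i (m' + 1) with hlt | hge
        · have hm' := ih (by omega) (by omega)
          rcases hstep m' with hst | hst
          · omega
          · by_cases hsm : s m' = t
            · exact absurd (Finset.mem_image.mpr ⟨m', Finset.mem_filter.mpr
                ⟨Finset.mem_range.mpr (by omega), hst⟩, hsm⟩) htD
            · omega
        · have : i = m' + 1 := by omega
          rw [← this, hsi]
    refine ⟨⟨i, hiN⟩, ⟨⟨fun j hj => ?_, fun j hj => ?_⟩, hsi⟩⟩
    · show s j.1 < s i
      rw [hsi]
      exact hmin j.1 hj
    · show s i ≤ s j.1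
      rw [hsi]
      exact hfut j.1 hj j.isLt
  have hmapsto : ∀ t ∈ C, (if h : ∃ i : Fin N,
      ((∀ j : Fin N, j < i → s j.1 < s i.1) ∧ ∀ j : Fin N, i ≤ j → s i.1 ≤ s j.1) ∧ s i.1 = t
      then h.choose else (⟨0, hN⟩ : Fin N)) ∈ T := by
    intro t ht
    rw [dif_pos (hex t ht)]
    exact Finset.mem_filter.mpr ⟨Finset.mem_univ _, (hex t ht).choose_spec.1⟩
  have hinjon : ∀ t ∈ C, ∀ t' ∈ C, (if h : ∃ i : Fin N,
      ((∀ j : Fin N, j < i → s j.1 < s i.1) ∧ ∀ j : Fin N, i ≤ j → s i.1 ≤ s j.1) ∧ s i.1 = t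
      then h.choose else (⟨0, hN⟩ : Fin N)) = (if h : ∃ i : Fin N,
      ((∀ j : Fin N, j < i → s j.1 < s i.1) ∧ ∀ j : Fin N, i ≤ j → s i.1 ≤ s j.1) ∧ s i.1 = t'
      then h.choose else (⟨0, hN⟩ : Fin N)) → t = t' := by
    intro t ht t' ht' heq
    rw [dif_pos (hex t ht), dif_pos (hex t' ht')] at heq
    have e1 := (hex t ht).choose_spec.2
    have e2 := (hex t' ht').choose_spec.2
    rw [← e1, ← e2, heq]
  have hcard : C.card ≤ T.card := Finset.card_le_card_of_injOn _ hmapsto hinjon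
  have hIcc : ((Finset.Icc (1:ℤ) V).card : ℤ) = (V).toNat := by
    rw [Int.card_Icc, add_sub_cancel_right]
  have hVle : V ≤ ((Finset.Icc (1:ℤ) V).card : ℤ) := by
    rw [hIcc]; exact Int.self_le_toNat V
  have hDle : D.card ≤ Dn.card := Finset.card_image_le
  have hsd : (Finset.Icc (1:ℤ) V).card - D.card ≤ C.card := Finset.le_card_sdiff D _
  omega

/-- Lemma 5.4: let `L ∈ ℕ`, `A ⊆ Λ_n`, `x, y ∈ A` with
`ȳ = x̄ + L`, and let `γ` be a self-avoiding nearest-neighbour path in `A`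
from `x` to `y` with `|γ| < (1+δ)L` vertices. Then `γ` has at least
`(1 − 3δ)L` pre-regeneration points. -/
theorem pre_regeneration_count (L : ℕ) (δ : ℝ) (hδ : 0 < δ)
    (A : Finset (Cyl d n)) (x y : Cyl d n) (hx : x ∈ A) (hy : y ∈ A)
    (l : List (Cyl d n)) (hnd : l.Nodup)
    (hch : l.Chain' (cylGraph d n).Adj)
    (hhead : l.head? = some x) (hlast : l.getLast? = some y)
    (hsub : ∀ v ∈ l, v ∈ A)
    (hco : (y.1 : ℕ) = (x.1 : ℕ) + L)
    (hlen : (l.length : ℝ) < (1 + δ) * L) :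
    (1 - 3 * δ) * L ≤
      ((Finset.univ.filter fun i : Fin l.length => isPreRegIdx d n l i).card : ℝ) := by
  classical
  have hN : 0 < l.length := by
    cases l with
    | nil => simp at hhead
    | cons a t => simp
  set N := l.length with hNdef
  set v : ℕ → Cyl d n := fun k => l.getD k x with hv
  have hvget : ∀ i : Fin N, l.get i = v i.1 := by
    intro i
    rw [List.get_eq_getElem]
    simp only [hv, List.getD_eq_getElem?_getD, List.getElem?_eq_getElem i.isLt,
      Option.getD_some]
  set hgt : ℕ → ℤ := fun k => (((v k).1 : ℕ) : ℤ) with hhgt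
  set s : ℕ → ℤ := fun k =>
    ∑ j ∈ Finset.range k, (if hgt (j+1) = hgt j + 1 then (1:ℤ) else -1) with hsdefn
  have hsdef : ∀ k, s (k+1) = s k + (if hgt (k+1) = hgt k + 1 then (1:ℤ) else -1) :=
    fun k => Finset.sum_range_succ _ k
  have hstep : ∀ k, s (k+1) = s k + 1 ∨ s (k+1) = s k - 1 := by
    intro k
    rw [hsdef k]
    by_cases hg : hgt (k+1) = hgt k + 1
    · left; rw [if_pos hg]
    · right; rw [if_neg hg]; ring
  have hs0 : s 0 = 0 := by simp [hsdefn]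
  have hadj : ∀ k, k + 1 < N → (cylGraph d n).Adj (v k) (v (k+1)) := by
    intro k hk
    have h1 : (cylGraph d n).Adj (l.get ⟨k, by omega⟩) (l.get ⟨k+1, by omega⟩) :=
      List.isChain_iff_getElem.mp hch k (by omega)
    rwa [hvget ⟨k, by omega⟩, hvget ⟨k+1, by omega⟩] at h1
  have hcases : ∀ k, k + 1 < N →
      ((v (k+1)).2 = (v k).2 ∧ (hgt (k+1) = hgt k + 1 ∨ hgt (k+1) = hgt k - 1)) ∨
      (hgt (k+1) = hgt k ∧ ∃ j : Fin (d-1),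
        (∀ kk : Fin (d-1), kk ≠ j → (v k).2 kk = (v (k+1)).2 kk) ∧
        ((v k).2 j = (v (k+1)).2 j + 1 ∨ (v (k+1)).2 j = (v k).2 j + 1)) := by
    intro k hk
    obtain ⟨-, hc⟩ := hadj k hk
    rcases hc with ⟨h2, h1⟩ | ⟨h1, j, hj1, hj2⟩
    · refine Or.inl ⟨h2.symm, ?_⟩
      rcases h1 with h | h
      · left; simp only [hhgt]; omega
      · right; simp only [hhgt]; omega
    · exact Or.inr ⟨by simp only [hhgt, h1], j, hj1, hj2⟩
  have hlow : ∀ k, k + 1 < N → hgt k - 1 ≤ hgt (k+1) := by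
    intro k hk
    rcases hcases k hk with ⟨-, h | h⟩ | ⟨h, -⟩ <;> omega
  have hbad : ∀ k, k + 1 < N → ¬(hgt (k+1) = hgt k + 1) → hgt (k+1) ≤ hgt k := by
    intro k hk hg
    rcases hcases k hk with ⟨-, h | h⟩ | ⟨h, -⟩ <;> omega
  have hAtel : ∀ i j : ℕ, i ≤ j → j < N → s j - s i ≤ hgt j - hgt i := by
    intro i j hij hjN
    induction j with
    | zero =>
      have h0 : i = 0 := by omega
      subst h0; simp
    | succ m ih =>
      rcases Nat.eq_or_lt_of_le hij with heq | hlt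
      · subst heq; simp
      · have h1 := ih (by omega) (by omega)
        have h2 := hsdef m
        by_cases hg : hgt (m+1) = hgt m + 1
        · rw [if_pos hg] at h2; omega
        · rw [if_neg hg] at h2
          have h3 := hlow m (by omega)
          omega
  have hBtel : ∀ i : ℕ, i < N → ∀ j : ℕ, i ≤ j → j < N →
      s j - s i ≤ hgt j - (hatDist d n (v i) (v j) : ℤ) - hgt i := by
    intro i hiN j hij hjN
    induction j with
    | zero =>
      have h0 : i = 0 := by omega
      subst h0; simp [hatDist_self]
    | succ m ih =>
      rcases Nat.eq_or_lt_of_le hij with heq | hlt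
      · rw [← heq]
        simp [hatDist_self]
      · have h1 := ih (by omega) (by omega)
        have h2 := hsdef m
        rcases hcases m (by omega) with ⟨h2', hpm⟩ | ⟨h0, j0, hj1, hj2⟩
        · have hDeq : hatDist d n (v i) (v (m+1)) = hatDist d n (v i) (v m) :=
            hatDist_congr d n (v i) (v (m+1)) (v m) h2'
          rw [hDeq]
          rcases hpm with hg | hg
          · rw [if_pos hg] at h2; omega
          · have hg' : ¬(hgt (m+1) = hgt m + 1) := by omega
            rw [if_neg hg'] at h2; omega
        · have hg' : ¬(hgt (m+1) = hgt m + 1) := by omega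
          rw [if_neg hg'] at h2
          have hDle : hatDist d n (v i) (v (m+1)) ≤ hatDist d n (v i) (v m) + 1 :=
            hatDist_adj d n (v i) (v m) (v (m+1)) j0 hj1 hj2
          have hDle' : (hatDist d n (v i) (v (m+1)) : ℤ)
              ≤ (hatDist d n (v i) (v m) : ℤ) + 1 := by exact_mod_cast hDle
          omega
  have hcount : ∀ j : ℕ, j < N →
      hgt j - hgt 0 ≤ (((Finset.range j).filter fun k => hgt (k+1) = hgt k + 1).card : ℤ) := by
    intro j hjN
    induction j with
    | zero => simp
    | succ m ih =>
      have h1 := ih (by omega)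
      rw [Finset.range_add_one, Finset.filter_insert]
      by_cases hg : hgt (m+1) = hgt m + 1
      · rw [if_pos hg, Finset.card_insert_of_notMem (by simp)]
        push_cast
        omega
      · rw [if_neg hg]
        have := hbad m (by omega) hg
        omega
  have hx0 : v 0 = x := by
    simp only [hv, List.getD_eq_getElem?_getD]
    rw [← List.head?_eq_getElem?, hhead, Option.getD_some]
  have hyN : v (N-1) = y := by
    simp only [hv, List.getD_eq_getElem?_getD, hNdef]
    rw [← List.getLast?_eq_getElem?, hlast, Option.getD_some]
  have hLrel : hgt (N-1) = hgt 0 + L := by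
    have h1 : ((y.1 : ℕ) : ℤ) = ((x.1 : ℕ) : ℤ) + L := by exact_mod_cast hco
    simp only [hhgt, hx0, hyN]
    exact h1
  set G := ((Finset.range (N-1)).filter fun k => hgt (k+1) = hgt k + 1).card with hG
  have hLG : (L : ℤ) ≤ G := by
    have := hcount (N-1) (by omega)
    omega
  have hGN : G ≤ N - 1 := by
    calc G ≤ (Finset.range (N-1)).card := Finset.card_filter_le _ _
      _ = N - 1 := Finset.card_range _
  have hval : ∀ j : ℕ,
      s j = 2 * (((Finset.range j).filter fun k => hgt (k+1) = hgt k + 1).card : ℤ) - j := by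
    intro j
    induction j with
    | zero => simp [hs0]
    | succ m ih =>
      rw [hsdef m, Finset.range_add_one, Finset.filter_insert]
      by_cases hg : hgt (m+1) = hgt m + 1
      · rw [if_pos hg, if_pos hg, Finset.card_insert_of_notMem (by simp)]
        push_cast
        omega
      · rw [if_neg hg, if_neg hg]
        push_cast
        omega
  have hdowncard : ((Finset.range (N-1)).filter fun k => s (k+1) = s k - 1).card
      = (N-1) - G := by
    have hagree : ∀ k ∈ Finset.range (N-1),
        ((s (k+1) = s k - 1) ↔ ¬(hgt (k+1) = hgt k + 1)) := by
      intro k _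
      rw [hsdef k]
      by_cases hg : hgt (k+1) = hgt k + 1
      · rw [if_pos hg]
        constructor
        · intro h; omega
        · intro h; exact absurd hg h
      · rw [if_neg hg]
        constructor
        · intro _; exact hg
        · intro _; ring
    rw [Finset.filter_congr hagree]
    have hsplit := Finset.card_filter_add_card_filter_not
      (s := Finset.range (N-1)) (p := fun k => hgt (k+1) = hgt k + 1)
    rw [Finset.card_range] at hsplit
    omega
  have hwalk := walk_count N hN s hs0 hstep
  have himp : ∀ i : Fin N,
      ((∀ j : Fin N, j < i → s j.1 < s i.1) ∧ ∀ j : Fin N, i ≤ j → s i.1 ≤ s j.1) →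
      isPreRegIdx d n l i := by
    intro i hi
    obtain ⟨hp, hf⟩ := hi
    constructor
    · intro j hij
      have h1 := hf j (le_of_lt hij)
      have hij' : i.1 ≤ j.1 := le_of_lt hij
      have h2 := hBtel i.1 i.isLt j.1 hij' j.isLt
      rw [hvget i, hvget j]
      left
      have h3 : (((v i.1).1 : ℕ) : ℤ) + (hatDist d n (v i.1) (v j.1) : ℤ)
          ≤ (((v j.1).1 : ℕ) : ℤ) := by
        simp only [hhgt] at h2
        omega
      exact_mod_cast h3
    · intro j hji
      have h1 := hp j hji
      have hji' : j.1 ≤ i.1 := le_of_lt hji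
      have h2 := hAtel j.1 i.1 hji' i.isLt
      rw [hvget i, hvget j]
      have h3 : (((v j.1).1 : ℕ) : ℤ) < (((v i.1).1 : ℕ) : ℤ) := by
        simp only [hhgt] at h2
        omega
      exact_mod_cast h3
  have hsubT : (Finset.univ.filter fun i : Fin N =>
      (∀ j : Fin N, j < i → s j.1 < s i.1) ∧ ∀ j : Fin N, i ≤ j → s i.1 ≤ s j.1).card
      ≤ (Finset.univ.filter fun i : Fin N => isPreRegIdx d n l i).card := by
    apply Finset.card_le_card
    intro i hi
    rw [Finset.mem_filter] at hi ⊢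
    exact ⟨hi.1, himp i hi.2⟩
  set K := (Finset.univ.filter fun i : Fin N => isPreRegIdx d n l i).card with hK
  have hKZ : 3 * (L:ℤ) - 2 * ((N:ℤ) - 1) ≤ (K:ℤ) := by
    rw [hdowncard] at hwalk
    have h1 : s (N-1) - (((N-1) - G : ℕ) : ℤ) ≤ (K:ℤ) :=
      le_trans hwalk (by exact_mod_cast hsubT)
    have h2 := hval (N-1)
    rw [← hG] at h2
    have hc1 : ((N-1 : ℕ) : ℤ) = (N:ℤ) - 1 := by omega
    have hc2 : (((N-1) - G : ℕ) : ℤ) = (N:ℤ) - 1 - (G:ℤ) := by omega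
    omega
  have hKR : 3 * (L:ℝ) - 2 * ((N:ℝ) - 1) ≤ (K:ℝ) := by exact_mod_cast hKZ
  have hδL : 0 ≤ δ * L := mul_nonneg hδ.le (Nat.cast_nonneg L)
  nlinarith [hKR, hδL, hlen]

end SRP
end
end
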